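/- arXiv:1401.3670 — 7 statements merged into one kernel-verified Lean document; each statement's English description precedes it below -/
import Mathlib

section
/- Let P be a set of edges of G (ordered pairs of distinct vertices) such that in P every vertex has at most one outgoing edge and at most one incoming edge, and P contains no directed cycle (i.e., P is a collection of vertex-disjoint directed paths). Then there exists a Hamiltonian tour τ of G with P ⊆ E(τ); in particular, w(τ) ≥ Σ_{e ∈ P} w(e). -/
open Relation Finset
set_option linter.unusedSectionVars false
set_option maxHeartbeats 1000000

section Helpers
variable {V : Type*} [Fintype V] [DecidableEq V]

/-- Any injective-type endo-walk on a nonempty finite set yields a cycle. -/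
private lemma exists_transGen_cycle {r : V → V → Prop} {S : Finset V} (hS : S.Nonempty)
    {f : V → V} (hf : ∀ v ∈ S, f v ∈ S ∧ r v (f v)) :
    ∃ x, Relation.TransGen r x x := by
  obtain ⟨v0, hv0⟩ := hS
  set g : {x // x ∈ S} → {x // x ∈ S} := fun x => ⟨f x.1, (hf x.1 x.2).1⟩ with hg
  have key : ∀ (m : ℕ) (y : {x // x ∈ S}), Relation.TransGen r y.1 ((g^[m+1]) y).1 := by
    intro m
    induction m with
    | zero => intro y; exact Relation.TransGen.single (hf y.1 y.2).2
    | succ n ih =>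
        intro y
        have h1 := ih y
        have h2 : (g^[n+1+1]) y = g ((g^[n+1]) y) := by
          rw [Function.iterate_succ_apply']
        rw [h2]
        exact h1.tail (hf _ ((g^[n+1]) y).2).2
  obtain ⟨i, j, hij, heq⟩ := Finite.exists_ne_map_eq_of_infinite (fun n : ℕ => (g^[n]) ⟨v0, hv0⟩)
  wlog hlt : i < j generalizing i j
  · exact this j i hij.symm heq.symm (by omega)
  obtain ⟨m, rfl⟩ : ∃ m, j = (m+1) + i := ⟨j - i - 1, by omega⟩
  refine ⟨((g^[i]) ⟨v0, hv0⟩).1, ?_⟩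
  have h3 : (g^[m+1]) ((g^[i]) ⟨v0, hv0⟩) = (g^[i]) ⟨v0, hv0⟩ := by
    rw [← Function.iterate_add_apply]
    exact heq.symm
  have h4 := key m ((g^[i]) ⟨v0, hv0⟩)
  rwa [h3] at h4

private lemma rtg_comparable {r : V → V → Prop}
    (hr : ∀ x y z, r x z → r y z → x = y) {x m y : V}
    (h1 : ReflTransGen r x m) :
    ReflTransGen r y m → ReflTransGen r x y ∨ ReflTransGen r y x := by
  induction h1 with
  | refl => intro h2; exact Or.inr h2
  | tail hxc hcm ih =>
      intro h2
      rcases h2.cases_tail with h | ⟨d, hyd, hdm⟩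
      · subst h; exact Or.inl ((ReflTransGen.tail hxc hcm))
      · rw [hr _ _ _ hdm hcm] at hyd
        exact ih hyd

private lemma transGen_insert {P : Finset (V × V)} {a b : V} {x y : V}
    (h : TransGen (fun u v => (u,v) ∈ insert (a,b) P) x y) :
    TransGen (fun u v => (u,v) ∈ P) x y ∨
      (ReflTransGen (fun u v => (u,v) ∈ P) x a ∧ ReflTransGen (fun u v => (u,v) ∈ P) b y) := by
  induction h with
  | single h =>
      rcases Finset.mem_insert.1 h with h | h
      · obtain ⟨rfl, rfl⟩ := Prod.mk.inj h
        exact Or.inr ⟨ReflTransGen.refl, ReflTransGen.refl⟩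
      · exact Or.inl (TransGen.single h)
  | tail hxz hzy ih =>
      rcases Finset.mem_insert.1 hzy with h | h
      · obtain ⟨rfl, rfl⟩ := Prod.mk.inj h
        rcases ih with h' | ⟨ha1, _⟩
        · exact Or.inr ⟨h'.to_reflTransGen, ReflTransGen.refl⟩
        · exact Or.inr ⟨ha1, ReflTransGen.refl⟩
      · rcases ih with h' | ⟨ha1, hb1⟩
        · exact Or.inl (h'.tail h)
        · exact Or.inr ⟨ha1, hb1.tail h⟩

private lemma extend_lemma (n : ℕ) :
    ∀ P : Finset (V × V),
      (∀ e ∈ P, e.1 ≠ e.2) →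
      (∀ e ∈ P, ∀ f ∈ P, e.1 = f.1 → e = f) →
      (∀ e ∈ P, ∀ f ∈ P, e.2 = f.2 → e = f) →
      (¬ ∃ x, TransGen (fun a b => (a,b) ∈ P) x x) →
      P.card + n + 1 = Fintype.card V →
      ∃ Q : Finset (V × V), P ⊆ Q ∧
        (∀ e ∈ Q, e.1 ≠ e.2) ∧
        (∀ e ∈ Q, ∀ f ∈ Q, e.1 = f.1 → e = f) ∧
        (∀ e ∈ Q, ∀ f ∈ Q, e.2 = f.2 → e = f) ∧
        (¬ ∃ x, TransGen (fun a b => (a,b) ∈ Q) x x) ∧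
        Q.card + 1 = Fintype.card V := by
  induction n with
  | zero =>
      intro P h1 h2 h3 h4 h5
      exact ⟨P, Finset.Subset.refl P, h1, h2, h3, h4, by omega⟩
  | succ n ih =>
      intro P h1 h2 h3 h4 h5
      classical
      have himgf : (P.image Prod.fst).card = P.card :=
        Finset.card_image_of_injOn (fun e he f hf hef => h2 e he f hf hef)
      have himgs : (P.image Prod.snd).card = P.card :=
        Finset.card_image_of_injOn (fun e he f hf hef => h3 e he f hf hef)
      have hSK : (Finset.univ \ P.image Prod.fst).card = n + 2 := by
        rw [Finset.card_sdiff_of_subset (Finset.subset_univ _), himgf, Finset.card_univ]; omega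
      have hSRC : (Finset.univ \ P.image Prod.snd).card = n + 2 := by
        rw [Finset.card_sdiff_of_subset (Finset.subset_univ _), himgs, Finset.card_univ]; omega
      -- pick a sink a
      obtain ⟨a, haSK⟩ : (Finset.univ \ P.image Prod.fst).Nonempty := by
        rw [← Finset.card_pos, hSK]; omega
      have haout : a ∉ P.image Prod.fst := (Finset.mem_sdiff.1 haSK).2
      -- sources reaching a: at most one
      have hr : ∀ x y z : V, (x, z) ∈ P → (y, z) ∈ P → x = y := by
        intro x y z hx hy
        have := h3 (x,z) hx (y,z) hy rfl
        exact congrArg Prod.fst this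
      set SRC := Finset.univ \ P.image Prod.snd with hSRCdef
      set F := SRC.filter (fun b => ReflTransGen (fun u v => (u,v) ∈ P) b a) with hF
      have hsrc_noin : ∀ b ∈ SRC, ∀ c, ¬ (c, b) ∈ P := by
        intro b hb c hcb
        exact (Finset.mem_sdiff.1 hb).2 (Finset.mem_image.2 ⟨(c,b), hcb, rfl⟩)
      have hFcard : F.card ≤ 1 := by
        apply Finset.card_le_one.2
        intro b1 hb1 b2 hb2
        obtain ⟨hb1s, hb1r⟩ := Finset.mem_filter.1 hb1
        obtain ⟨hb2s, hb2r⟩ := Finset.mem_filter.1 hb2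
        rcases rtg_comparable hr hb1r hb2r with h | h
        · rcases h.cases_tail with h | ⟨c, _, hc⟩
          · exact h.symm
          · exact absurd hc (hsrc_noin b2 hb2s c)
        · rcases h.cases_tail with h | ⟨c, _, hc⟩
          · exact h
          · exact absurd hc (hsrc_noin b1 hb1s c)
      have hFsub : F ⊆ SRC := Finset.filter_subset _ _
      obtain ⟨b, hbSRC, hbF⟩ : ∃ b ∈ SRC, b ∉ F := by
        by_contra hcon
        push_neg at hcon
        have : SRC ⊆ F := fun x hx => hcon x hx
        have h6 := Finset.card_le_card this
        have h7 : SRC.card = n + 2 := hSRC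
        omega
      have hbna : ¬ ReflTransGen (fun u v => (u,v) ∈ P) b a := by
        intro h; exact hbF (Finset.mem_filter.2 ⟨hbSRC, h⟩)
      have hab : a ≠ b := fun h => hbna (h ▸ ReflTransGen.refl)
      have habP : (a, b) ∉ P := fun h => haout (Finset.mem_image.2 ⟨(a,b), h, rfl⟩)
      -- properties of insert (a,b) P
      have hne' : ∀ e ∈ insert (a,b) P, e.1 ≠ e.2 := by
        intro e he
        rcases Finset.mem_insert.1 he with rfl | he
        · exact hab
        · exact h1 e he
      have haout' : ∀ e ∈ P, e.1 ≠ a := by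
        intro e he h
        exact haout (Finset.mem_image.2 ⟨e, he, h⟩)
      have hbin' : ∀ e ∈ P, e.2 ≠ b := by
        intro e he h
        exact (Finset.mem_sdiff.1 hbSRC).2 (Finset.mem_image.2 ⟨e, he, h⟩)
      have hout' : ∀ e ∈ insert (a,b) P, ∀ f ∈ insert (a,b) P, e.1 = f.1 → e = f := by
        intro e he f hf hef
        rcases Finset.mem_insert.1 he with rfl | he <;> rcases Finset.mem_insert.1 hf with rfl | hf
        · rfl
        · exact absurd hef.symm (haout' f hf)
        · exact absurd hef (haout' e he)
        · exact h2 e he f hf hef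
      have hin' : ∀ e ∈ insert (a,b) P, ∀ f ∈ insert (a,b) P, e.2 = f.2 → e = f := by
        intro e he f hf hef
        rcases Finset.mem_insert.1 he with rfl | he <;> rcases Finset.mem_insert.1 hf with rfl | hf
        · rfl
        · exact absurd hef.symm (hbin' f hf)
        · exact absurd hef (hbin' e he)
        · exact h3 e he f hf hef
      have hacyc' : ¬ ∃ x, TransGen (fun u v => (u,v) ∈ insert (a,b) P) x x := by
        rintro ⟨x, hx⟩
        rcases transGen_insert hx with h | ⟨hxa, hbx⟩
        · exact h4 ⟨x, h⟩
        · exact hbna (hbx.trans hxa)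
      have hcard' : (insert (a,b) P).card + n + 1 = Fintype.card V := by
        rw [Finset.card_insert_of_notMem habP]; omega
      obtain ⟨Q, hPQ, hq1, hq2, hq3, hq4, hq5⟩ := ih (insert (a,b) P) hne' hout' hin' hacyc' hcard'
      exact ⟨Q, (Finset.subset_insert _ _).trans hPQ, hq1, hq2, hq3, hq4, hq5⟩

private lemma final_lemma {Q : Finset (V × V)} (hV : 2 ≤ Fintype.card V)
    (h1 : ∀ e ∈ Q, e.1 ≠ e.2)
    (h2 : ∀ e ∈ Q, ∀ f ∈ Q, e.1 = f.1 → e = f)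
    (h3 : ∀ e ∈ Q, ∀ f ∈ Q, e.2 = f.2 → e = f)
    (h4 : ¬ ∃ x, TransGen (fun a b => (a,b) ∈ Q) x x)
    (h5 : Q.card + 1 = Fintype.card V) :
    ∃ τ : Equiv.Perm V, τ.IsCycle ∧ τ.support = Finset.univ ∧ (∀ e ∈ Q, τ e.1 = e.2) := by
  classical
  have himgf : (Q.image Prod.fst).card = Q.card :=
    Finset.card_image_of_injOn (fun e he f hf hef => h2 e he f hf hef)
  have himgs : (Q.image Prod.snd).card = Q.card :=
    Finset.card_image_of_injOn (fun e he f hf hef => h3 e he f hf hef)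
  have hSK : (Finset.univ \ Q.image Prod.fst).card = 1 := by
    rw [Finset.card_sdiff_of_subset (Finset.subset_univ _), himgf, Finset.card_univ]; omega
  have hSRC : (Finset.univ \ Q.image Prod.snd).card = 1 := by
    rw [Finset.card_sdiff_of_subset (Finset.subset_univ _), himgs, Finset.card_univ]; omega
  obtain ⟨a, ha⟩ := Finset.card_eq_one.1 hSK
  obtain ⟨b, hb⟩ := Finset.card_eq_one.1 hSRC
  have haout : ∀ c, (a, c) ∉ Q := by
    intro c hc
    have : a ∈ Finset.univ \ Q.image Prod.fst := ha ▸ Finset.mem_singleton_self a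
    exact (Finset.mem_sdiff.1 this).2 (Finset.mem_image.2 ⟨(a,c), hc, rfl⟩)
  have hbin : ∀ c, (c, b) ∉ Q := by
    intro c hc
    have : b ∈ Finset.univ \ Q.image Prod.snd := hb ▸ Finset.mem_singleton_self b
    exact (Finset.mem_sdiff.1 this).2 (Finset.mem_image.2 ⟨(c,b), hc, rfl⟩)
  have hnexta : ∀ v : V, v ≠ a → ∃ e ∈ Q, e.1 = v := by
    intro v hv
    by_contra hcon
    push_neg at hcon
    have hv1 : v ∈ Finset.univ \ Q.image Prod.fst := by
      refine Finset.mem_sdiff.2 ⟨Finset.mem_univ v, ?_⟩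
      intro h
      obtain ⟨e, he, he1⟩ := Finset.mem_image.1 h
      exact hcon e he he1
    rw [ha, Finset.mem_singleton] at hv1
    exact hv hv1
  have hpredb : ∀ v : V, v ≠ b → ∃ e ∈ Q, e.2 = v := by
    intro v hv
    by_contra hcon
    push_neg at hcon
    have hv1 : v ∈ Finset.univ \ Q.image Prod.snd := by
      refine Finset.mem_sdiff.2 ⟨Finset.mem_univ v, ?_⟩
      intro h
      obtain ⟨e, he, he1⟩ := Finset.mem_image.1 h
      exact hcon e he he1
    rw [hb, Finset.mem_singleton] at hv1
    exact hv hv1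
  -- a ≠ b
  have hab : a ≠ b := by
    intro hEq
    subst hEq
    -- every v ≠ a has an out-edge whose target is ≠ a; cycle
    have hex : ∀ v : V, ∃ u : V, v ≠ a → (v, u) ∈ Q := by
      intro v
      by_cases hv : v = a
      · exact ⟨a, fun h => absurd hv h⟩
      · obtain ⟨e, he, he1⟩ := hnexta v hv
        refine ⟨e.2, fun _ => ?_⟩
        have : (e.1, e.2) = e := rfl
        rw [← he1]; rw [this]; exact he
    choose nxt hnxt using hex
    have hS : (Finset.univ.erase a).Nonempty := by
      rw [← Finset.card_pos, Finset.card_erase_of_mem (Finset.mem_univ a), Finset.card_univ]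
      omega
    obtain ⟨x, hx⟩ := exists_transGen_cycle (r := fun u v => (u,v) ∈ Q) hS
      (f := nxt) (by
        intro v hv
        have hvne : v ≠ a := (Finset.mem_erase.1 hv).1
        have hQ := hnxt v hvne
        refine ⟨Finset.mem_erase.2 ⟨?_, Finset.mem_univ _⟩, hQ⟩
        intro h
        exact hbin v (h ▸ hQ))
    exact h4 ⟨x, hx⟩
  -- define the successor function
  have hex : ∀ v : V, ∃ u : V, (v = a → u = b) ∧ (v ≠ a → (v, u) ∈ Q) := by
    intro v
    by_cases hv : v = a
    · exact ⟨b, fun _ => rfl, fun h => absurd hv h⟩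
    · obtain ⟨e, he, he1⟩ := hnexta v hv
      refine ⟨e.2, fun h => absurd h hv, fun _ => ?_⟩
      have : (e.1, e.2) = e := rfl
      rw [← he1]; rw [this]; exact he
  choose f hfa hfQ using hex
  have hfb : f a = b := hfa a rfl
  have hfinj : Function.Injective f := by
    intro u v huv
    by_cases hu : u = a <;> by_cases hv : v = a
    · rw [hu, hv]
    · exfalso
      have h6 := hfQ v hv
      rw [← huv, hu, hfb] at h6
      exact hbin v h6
    · exfalso
      have h6 := hfQ u hu
      rw [huv, hv, hfb] at h6
      exact hbin u h6
    · have h6 := hfQ u hu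
      have h7 := hfQ v hv
      rw [huv] at h6
      have := h3 (u, f v) h6 (v, f v) h7 rfl
      exact congrArg Prod.fst this
  let τ : Equiv.Perm V := Equiv.ofBijective f (Finite.injective_iff_bijective.1 hfinj)
  have hτ : ∀ v, τ v = f v := fun v => rfl
  have hedge : ∀ e ∈ Q, τ e.1 = e.2 := by
    intro e he
    have he1 : e.1 ≠ a := by
      intro h
      exact haout e.2 (by rw [← h]; exact he)
    have h6 := hfQ e.1 he1
    have := h2 (e.1, f e.1) h6 e he rfl
    rw [hτ]
    exact (congrArg Prod.snd this).trans rfl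
  have hnofix : ∀ v, τ v ≠ v := by
    intro v h
    by_cases hv : v = a
    · rw [hτ, hv, hfb] at h
      exact hab h.symm
    · have h6 := hfQ v hv
      rw [hτ] at h
      rw [h] at h6
      exact h1 (v, v) h6 rfl
  have hsupp : τ.support = Finset.univ :=
    Finset.eq_univ_iff_forall.2 fun v => Equiv.Perm.mem_support.2 (hnofix v)
  -- reachability from b
  have hreach : ∀ y : V, ReflTransGen (fun u v => (u,v) ∈ Q) b y := by
    by_contra hcon
    push_neg at hcon
    obtain ⟨y, hy⟩ := hcon
    set S := Finset.univ.filter (fun v => ¬ ReflTransGen (fun u v => (u,v) ∈ Q) b v) with hSdef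
    have hSne : S.Nonempty := ⟨y, Finset.mem_filter.2 ⟨Finset.mem_univ y, hy⟩⟩
    have hprd : ∀ v : V, ∃ u : V, v ≠ b → (u, v) ∈ Q := by
      intro v
      by_cases hv : v = b
      · exact ⟨b, fun h => absurd hv h⟩
      · obtain ⟨e, he, he1⟩ := hpredb v hv
        refine ⟨e.1, fun _ => ?_⟩
        have : (e.1, e.2) = e := rfl
        rw [← he1]; rw [this]; exact he
    choose prd hprd using hprd
    have hcyc := exists_transGen_cycle (r := fun u v => (v, u) ∈ Q) hSne (f := prd) (by
      intro v hv
      have hvS : ¬ ReflTransGen (fun u v => (u,v) ∈ Q) b v := (Finset.mem_filter.1 hv).2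
      have hvb : v ≠ b := by
        intro h
        exact hvS (h ▸ ReflTransGen.refl)
      have hQ := hprd v hvb
      refine ⟨Finset.mem_filter.2 ⟨Finset.mem_univ _, ?_⟩, hQ⟩
      intro h
      exact hvS (h.tail hQ))
    obtain ⟨x, hx⟩ := hcyc
    have : TransGen (fun u v => (u,v) ∈ Q) x x := (Relation.transGen_swap).1 hx
    exact h4 ⟨x, this⟩
  -- iterate form
  have hiter : ∀ y : V, ∃ k : ℕ, (τ ^ k) b = y := by
    intro y
    induction hreach y with
    | refl => exact ⟨0, rfl⟩
    | tail hbc hcy ih =>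
        obtain ⟨k, hk⟩ := ih
        refine ⟨k + 1, ?_⟩
        rw [pow_succ', Equiv.Perm.mul_apply, hk]
        exact hedge _ hcy
  refine ⟨τ, ⟨b, hnofix b, ?_⟩, hsupp, hedge⟩
  intro y _
  obtain ⟨k, hk⟩ := hiter y
  exact ⟨(k : ℤ), by rw [zpow_natCast]; exact hk⟩

end Helpers

/-- If `P` is a set of edges of the complete directed graph on `V`
(ordered pairs of distinct vertices) in which every vertex has at most one
outgoing and at most one incoming edge and which contains no directed cycle
(a collection of vertex-disjoint directed paths), then there is a Hamiltonian
tour `τ` with `P ⊆ E(τ)`; in particular `w(τ) ≥ Σ_{e ∈ P} w(e)`. -/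
theorem stmt_3 {V : Type*} [Fintype V] [DecidableEq V]
    (hV : 2 ≤ Fintype.card V)
    (w : V → V → ℝ) (hw : ∀ u v : V, u ≠ v → 0 ≤ w u v)
    (P : Finset (V × V))
    (hPne : ∀ e ∈ P, e.1 ≠ e.2)
    (hout : ∀ e ∈ P, ∀ f ∈ P, e.1 = f.1 → e = f)
    (hin : ∀ e ∈ P, ∀ f ∈ P, e.2 = f.2 → e = f)
    (hacyc : ¬ ∃ x : V, Relation.TransGen (fun a b => (a, b) ∈ P) x x) :
    ∃ τ : Equiv.Perm V, τ.IsCycle ∧ τ.support = Finset.univ ∧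
      (∀ e ∈ P, τ e.1 = e.2) ∧
      ∑ e ∈ P, w e.1 e.2 ≤ ∑ v, w v (τ v) := by
  classical
  -- P.card < Fintype.card V
  have himgf : (P.image Prod.fst).card = P.card :=
    Finset.card_image_of_injOn (fun e he f hf hef => hout e he f hf hef)
  have hlt : P.card < Fintype.card V := by
    by_contra hcon
    push_neg at hcon
    have hle : (P.image Prod.fst).card ≤ Fintype.card V := by
      rw [← Finset.card_univ]; exact Finset.card_le_card (Finset.subset_univ _)
    have heq : (P.image Prod.fst) = Finset.univ :=
      Finset.eq_univ_of_card _ (by omega)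
    have hex : ∀ v : V, ∃ u : V, (v, u) ∈ P := by
      intro v
      have : v ∈ P.image Prod.fst := heq ▸ Finset.mem_univ v
      obtain ⟨e, he, he1⟩ := Finset.mem_image.1 this
      exact ⟨e.2, by rw [← he1]; exact he⟩
    choose nxt hnxt using hex
    have hSne : (Finset.univ : Finset V).Nonempty :=
      Finset.univ_nonempty_iff.2 (Fintype.card_pos_iff.1 (by omega))
    obtain ⟨x, hx⟩ := exists_transGen_cycle (r := fun u v => (u, v) ∈ P) hSne
      (f := nxt) (fun v _ => ⟨Finset.mem_univ _, hnxt v⟩)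
    exact hacyc ⟨x, hx⟩
  obtain ⟨Q, hPQ, hq1, hq2, hq3, hq4, hq5⟩ :=
    extend_lemma (Fintype.card V - P.card - 1) P hPne hout hin hacyc (by omega)
  obtain ⟨τ, hcyc, hsupp, hedge⟩ := final_lemma hV hq1 hq2 hq3 hq4 hq5
  refine ⟨τ, hcyc, hsupp, fun e he => hedge e (hPQ he), ?_⟩
  have hPedge : ∀ e ∈ P, τ e.1 = e.2 := fun e he => hedge e (hPQ he)
  have hsum1 : ∑ e ∈ P, w e.1 e.2 = ∑ v ∈ P.image Prod.fst, w v (τ v) := by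
    rw [Finset.sum_image (fun e he f hf hef => hout e he f hf hef)]
    apply Finset.sum_congr rfl
    intro e he
    rw [hPedge e he]
  rw [hsum1]
  apply Finset.sum_le_sum_of_subset_of_nonneg (Finset.subset_univ _)
  intro v _ _
  apply hw
  intro h
  have : τ v ≠ v := Equiv.Perm.mem_support.1 (hsupp ▸ Finset.mem_univ v)
  exact this h.symm
end

section
/- If σ is a cycle cover of G that contains no hard cycle (i.e., every cycle of σ contains an edge of weight at most one quarter of that cycle's total weight), then there exists a Hamiltonian tour τ of G with w(τ) ≥ (3/4)·w(σ). In particular, if σ is a maximum-weight cycle cover containing no hard cycle, then there exists a Hamiltonian tour of weight at least (3/4)·OPT. -/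
open Equiv Equiv.Perm Finset

section Aux

variable {V : Type*} [Fintype V] [DecidableEq V]

/-- If `d`'s cycle avoids `x` and `y`, powers of `σ * swap x y` agree with powers of `σ` on `d`. -/
lemma tsp_pow_avoid (σ : Equiv.Perm V) (x y d : V) (hdx : ¬σ.SameCycle d x)
    (hdy : ¬σ.SameCycle d y) (n : ℕ) :
    ((σ * Equiv.swap x y) ^ n) d = (σ ^ n) d := by
  induction n with
  | zero => simp
  | succ n ih =>
    have h1 : (σ ^ n) d ≠ x := fun h => hdx ⟨(n : ℤ), by rw [zpow_natCast, h]⟩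
    have h2 : (σ ^ n) d ≠ y := fun h => hdy ⟨(n : ℤ), by rw [zpow_natCast, h]⟩
    rw [pow_succ', pow_succ', Equiv.Perm.mul_apply, Equiv.Perm.mul_apply, ih,
      Equiv.Perm.mul_apply, Equiv.swap_apply_of_ne_of_ne h1 h2]

/-- Everything in the `σ`-cycle of `y` is in the `σ * swap x y`-cycle of `x`. -/
lemma tsp_reach (σ : Equiv.Perm V) (x y : V) (hxy : ¬σ.SameCycle x y) :
    ∀ v, σ.SameCycle y v → (σ * Equiv.swap x y).SameCycle x v := by
  set σ' := σ * Equiv.swap x y with hσ'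
  have hex : ∃ k, 0 < k ∧ (σ ^ k) y = y :=
    ⟨orderOf σ, orderOf_pos σ, by rw [pow_orderOf_eq_one]; rfl⟩
  set m := Nat.find hex with hm
  obtain ⟨hm0, hmy⟩ := Nat.find_spec hex
  have key : ∀ j, 1 ≤ j → j ≤ m → (σ' ^ j) x = (σ ^ j) y := by
    intro j
    induction j with
    | zero => omega
    | succ j ih =>
      intro _ hj
      rcases Nat.eq_zero_or_pos j with rfl | hj1
      · rw [pow_one, pow_one, hσ', Equiv.Perm.mul_apply, Equiv.swap_apply_left]
      · have hjm : j < m := by omega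
        have hy' : (σ ^ j) y ≠ y := fun h => Nat.find_min hex hjm ⟨hj1, h⟩
        have hx' : (σ ^ j) y ≠ x := fun h =>
          hxy (Equiv.Perm.SameCycle.symm ⟨(j : ℤ), by rw [zpow_natCast, h]⟩)
        rw [pow_succ', pow_succ', Equiv.Perm.mul_apply, Equiv.Perm.mul_apply,
          ih hj1 hjm.le]
        simp [Equiv.Perm.mul_apply, Equiv.swap_apply_of_ne_of_ne hx' hy']
  have hmx : (σ' ^ m) x = y := by rw [key m hm0 le_rfl, hmy]
  have hper : ∀ q, ((σ ^ m) ^ q) y = y := by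
    intro q
    induction q with
    | zero => simp
    | succ q ih => rw [pow_succ, Equiv.Perm.mul_apply, hmy, ih]
  intro v hv
  obtain ⟨i, _, hi⟩ := hv.exists_pow_eq'
  have hv' : (σ ^ (i % m)) y = v := by
    calc (σ ^ (i % m)) y = (σ ^ (i % m)) (((σ ^ m) ^ (i / m)) y) := by rw [hper]
    _ = (σ ^ (i % m + m * (i / m))) y := by
        rw [pow_add, Equiv.Perm.mul_apply, pow_mul]
    _ = v := by rw [Nat.mod_add_div, hi]
  rcases Nat.eq_zero_or_pos (i % m) with h0 | hpos
  · rw [h0, pow_zero] at hv'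
    exact ⟨(m : ℤ), by rw [zpow_natCast, hmx]; exact hv'⟩
  · have hlt : i % m < m := Nat.mod_lt _ hm0
    exact ⟨((i % m : ℕ) : ℤ), by rw [zpow_natCast, key _ hpos hlt.le, hv']⟩

/-- The `σ * swap x y`-orbit of `x` stays in the union of the `σ`-cycles of `x` and `y`. -/
lemma tsp_orbit (σ : Equiv.Perm V) (x y : V) (n : ℕ) :
    σ.SameCycle x (((σ * Equiv.swap x y) ^ n) x) ∨
      σ.SameCycle y (((σ * Equiv.swap x y) ^ n) x) := by
  induction n with
  | zero => left; simpa using Equiv.Perm.SameCycle.refl σ x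
  | succ n ih =>
    set u := ((σ * Equiv.swap x y) ^ n) x with hu
    have step : ∀ (c z : V), σ.SameCycle c z → σ.SameCycle c (σ z) := fun c z h =>
      h.trans ⟨1, by simp⟩
    rw [pow_succ', Equiv.Perm.mul_apply, Equiv.Perm.mul_apply, ← hu]
    by_cases hux : u = x
    · right; rw [hux, Equiv.swap_apply_left]; exact step y y (Equiv.Perm.SameCycle.refl σ y)
    · by_cases huy : u = y
      · left; rw [huy, Equiv.swap_apply_right]; exact step x x (Equiv.Perm.SameCycle.refl σ x)
      · rw [Equiv.swap_apply_of_ne_of_ne hux huy]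
        rcases ih with h | h
        · exact Or.inl (step x u h)
        · exact Or.inr (step y u h)

/-- Key lemma: given a fixed-point-free `σ` and a transversal `D` of its cycles,
there is a Hamiltonian cycle `τ` whose weight is at least the weight of `σ`
minus the weight of the edges leaving `D`. -/
lemma tsp_key [Nonempty V] (w : V → V → ℝ) (hw : ∀ u v : V, u ≠ v → 0 ≤ w u v) :
    ∀ n : ℕ, ∀ σ : Equiv.Perm V, ∀ D : Finset V, D.card ≤ n → (∀ v, σ v ≠ v) →
    (∀ v : V, ∃! d, d ∈ D ∧ σ.SameCycle d v) →
    ∃ τ : Equiv.Perm V, τ.IsCycle ∧ τ.support = Finset.univ ∧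
      ∑ v ∈ Dᶜ, w v (σ v) ≤ ∑ v, w v (τ v) := by
  intro n
  induction n with
  | zero =>
    intro σ D hcard _ htr
    exfalso
    obtain ⟨d, ⟨hd, _⟩, _⟩ := htr (Classical.arbitrary V)
    rw [Finset.card_eq_zero.mp (Nat.le_zero.mp hcard)] at hd
    exact absurd hd (Finset.notMem_empty d)
  | succ n ih =>
    intro σ D hcard hσ htr
    by_cases hsub : ∀ x ∈ D, ∀ y ∈ D, x = y
    · obtain ⟨d, ⟨hd, _⟩, _⟩ := htr (Classical.arbitrary V)
      have hall : ∀ v, σ.SameCycle d v := by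
        intro v
        obtain ⟨d', ⟨hd', hs⟩, _⟩ := htr v
        rwa [hsub d hd d' hd']
      refine ⟨σ, ⟨d, hσ d, fun y _ => hall y⟩, ?_, ?_⟩
      · exact Finset.eq_univ_iff_forall.mpr fun v => Equiv.Perm.mem_support.mpr (hσ v)
      · exact Finset.sum_le_sum_of_subset_of_nonneg (Finset.subset_univ _)
          (fun v _ _ => hw v (σ v) (Ne.symm (hσ v)))
    · push_neg at hsub
      obtain ⟨x, hx, y, hy, hxyne⟩ := hsub
      have huniq : ∀ a ∈ D, ∀ b ∈ D, σ.SameCycle a b → a = b := by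
        intro a ha b hb h
        obtain ⟨d, _, hu⟩ := htr b
        exact (hu a ⟨ha, h⟩).trans (hu b ⟨hb, Equiv.Perm.SameCycle.refl σ b⟩).symm
      have hxy : ¬σ.SameCycle x y := fun h => hxyne (huniq x hx y hy h)
      set σ' := σ * Equiv.swap x y with hσ'def
      have hx' : σ' x = σ y := by
        rw [hσ'def, Equiv.Perm.mul_apply, Equiv.swap_apply_left]
      have hy' : σ' y = σ x := by
        rw [hσ'def, Equiv.Perm.mul_apply, Equiv.swap_apply_right]
      have hother : ∀ v, v ≠ x → v ≠ y → σ' v = σ v := fun v h1 h2 => by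
        rw [hσ'def, Equiv.Perm.mul_apply, Equiv.swap_apply_of_ne_of_ne h1 h2]
      have hσyx : σ y ≠ x := fun h =>
        hxy (Equiv.Perm.SameCycle.symm ⟨1, by simpa using h⟩)
      have hσxy : σ x ≠ y := fun h => hxy ⟨1, by simpa using h⟩
      have hσ'fpf : ∀ v, σ' v ≠ v := by
        intro v
        by_cases h1 : v = x
        · rw [h1, hx']; exact hσyx
        · by_cases h2 : v = y
          · rw [h2, hy']
            exact fun h => hσxy h
          · rw [hother v h1 h2]; exact hσ v
      have hD' : (D.erase y).card ≤ n := by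
        rw [Finset.card_erase_of_mem hy]; omega
      have hxD' : x ∈ D.erase y := Finset.mem_erase.mpr ⟨hxyne, hx⟩
      have claim1 : ∀ d ∈ D.erase y, d ≠ x → ∀ v, (σ'.SameCycle d v ↔ σ.SameCycle d v) := by
        intro d hd hdx v
        have hdD : d ∈ D := Finset.mem_of_mem_erase hd
        have h1 : ¬σ.SameCycle d x := fun h => hdx (huniq d hdD x hx h)
        have h2 : ¬σ.SameCycle d y := fun h => (Finset.ne_of_mem_erase hd) (huniq d hdD y hy h)
        constructor
        · intro h
          obtain ⟨i, _, hi⟩ := h.exists_pow_eq'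
          exact ⟨(i : ℤ), by
            rw [zpow_natCast, ← tsp_pow_avoid σ x y d h1 h2 i]; exact hi⟩
        · intro h
          obtain ⟨i, _, hi⟩ := h.exists_pow_eq'
          exact ⟨(i : ℤ), by
            rw [zpow_natCast, hσ'def, tsp_pow_avoid σ x y d h1 h2 i]; exact hi⟩
      have claim2 : ∀ v, σ'.SameCycle x v → σ.SameCycle x v ∨ σ.SameCycle y v := by
        intro v h
        obtain ⟨i, _, hi⟩ := h.exists_pow_eq'
        rw [← hi]
        exact tsp_orbit σ x y i
      have hreach_y : ∀ v, σ.SameCycle y v → σ'.SameCycle x v := tsp_reach σ x y hxy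
      have hreach_x : ∀ v, σ.SameCycle x v → σ'.SameCycle x v := by
        intro v h
        have h1 : (σ * Equiv.swap y x).SameCycle y v :=
          tsp_reach σ y x (fun h' => hxy h'.symm) v h
        rw [Equiv.swap_comm y x] at h1
        exact (hreach_y y (Equiv.Perm.SameCycle.refl σ y)).trans h1
      have htr' : ∀ v : V, ∃! d, d ∈ D.erase y ∧ σ'.SameCycle d v := by
        intro v
        obtain ⟨d, ⟨hdD, hdv⟩, hu⟩ := htr v
        by_cases hdxy : d = x ∨ d = y
        · refine ⟨x, ⟨hxD', ?_⟩, ?_⟩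
          · rcases hdxy with rfl | rfl
            exacts [hreach_x v hdv, hreach_y v hdv]
          · rintro d'' ⟨hd'', h''⟩
            by_contra hne
            have hs : σ.SameCycle d'' v := (claim1 d'' hd'' hne v).mp h''
            have : d'' = d := hu d'' ⟨Finset.mem_of_mem_erase hd'', hs⟩
            rcases hdxy with rfl | rfl
            · exact hne this
            · exact (Finset.ne_of_mem_erase hd'') this
        · push_neg at hdxy
          obtain ⟨hdx, hdy⟩ := hdxy
          refine ⟨d, ⟨Finset.mem_erase.mpr ⟨hdy, hdD⟩, ?_⟩, ?_⟩
          · exact (claim1 d (Finset.mem_erase.mpr ⟨hdy, hdD⟩) hdx v).mpr hdv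
          · rintro d'' ⟨hd'', h''⟩
            by_cases hd''x : d'' = x
            · subst hd''x
              exfalso
              rcases claim2 v h'' with h | h
              · exact hdx (hu d'' ⟨hx, h⟩).symm
              · exact hdy (hu y ⟨hy, h⟩).symm
            · exact hu d'' ⟨Finset.mem_of_mem_erase hd'', (claim1 d'' hd'' hd''x v).mp h''⟩
      obtain ⟨τ, hτ1, hτ2, hτ3⟩ := ih σ' (D.erase y) hD' hσ'fpf htr'
      refine ⟨τ, hτ1, hτ2, le_trans ?_ hτ3⟩
      rw [Finset.compl_erase, Finset.sum_insert (by simpa using hy)]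
      have hsame : ∑ v ∈ Dᶜ, w v (σ' v) = ∑ v ∈ Dᶜ, w v (σ v) := by
        refine Finset.sum_congr rfl fun v hv => ?_
        have hvD : v ∉ D := by simpa using hv
        rw [hother v (fun h => hvD (h ▸ hx)) (fun h => hvD (h ▸ hy))]
      rw [hsame, hy']
      have : 0 ≤ w y (σ x) := hw y (σ x) (Ne.symm hσxy)
      linarith

end Aux

/-- If `σ` is a cycle cover containing no hard cycle (every cycle
of `σ` has an edge of weight at most a quarter of the cycle's weight), then
there is a Hamiltonian tour `τ` with `w(τ) ≥ (3/4)·w(σ)`.  (In particular, if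
`σ` is a maximum-weight cycle cover, such a tour has weight ≥ (3/4)·OPT.) -/
theorem stmt_4 {V : Type*} [Fintype V] [DecidableEq V]
    (hV : 2 ≤ Fintype.card V)
    (w : V → V → ℝ) (hw : ∀ u v : V, u ≠ v → 0 ≤ w u v)
    (σ : Equiv.Perm V) (hσ : ∀ v, σ v ≠ v)
    (hnohard : ∀ v : V, ∃ x ∈ (σ.cycleOf v).support,
      w x (σ x) ≤ (1 / 4) * ∑ y ∈ (σ.cycleOf v).support, w y (σ y)) :
    ∃ τ : Equiv.Perm V, τ.IsCycle ∧ τ.support = Finset.univ ∧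
      (3 / 4) * ∑ v, w v (σ v) ≤ ∑ v, w v (τ v) := by
  classical
  haveI : Nonempty V := Fintype.card_pos_iff.mp (by omega)
  letI : LinearOrder V := LinearOrder.lift' (Fintype.equivFin V) (Fintype.equivFin V).injective
  have hmem : ∀ v : V, v ∈ (σ.cycleOf v).support := fun v => by
    rw [Equiv.Perm.mem_support, Equiv.Perm.cycleOf_apply_self]; exact hσ v
  set F : V → V := fun v => Classical.choose (hnohard v) with hF
  have hFspec : ∀ v, F v ∈ (σ.cycleOf v).support ∧
      w (F v) (σ (F v)) ≤ (1 / 4) * ∑ y ∈ (σ.cycleOf v).support, w y (σ y) := by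
    intro v
    obtain ⟨h1, h2⟩ := Classical.choose_spec (hnohard v)
    exact ⟨h1, h2⟩
  have hF_same : ∀ v, σ.SameCycle v (F v) := fun v =>
    (Equiv.Perm.mem_support_cycleOf_iff.mp (hFspec v).1).1
  set rep : V → V := fun v => (σ.cycleOf v).support.min' ⟨v, hmem v⟩ with hrep
  have hrep_mem : ∀ v, rep v ∈ (σ.cycleOf v).support := fun v => Finset.min'_mem _ _
  have hrep_same : ∀ v, σ.SameCycle v (rep v) := fun v =>
    (Equiv.Perm.mem_support_cycleOf_iff.mp (hrep_mem v)).1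
  have hrep_eq : ∀ u v, σ.SameCycle u v → rep u = rep v := by
    intro u v h
    have : σ.cycleOf u = σ.cycleOf v := h.cycleOf_eq
    simp only [hrep, this]
  have hrep_idem : ∀ u, rep (rep u) = rep u :=
    fun u => hrep_eq (rep u) u (hrep_same u).symm
  set D : Finset V := Finset.image (fun v => F (rep v)) Finset.univ with hD
  have hmemD : ∀ v : V, F (rep v) ∈ D := fun v =>
    Finset.mem_image.mpr ⟨v, Finset.mem_univ v, rfl⟩
  have htr : ∀ v : V, ∃! d, d ∈ D ∧ σ.SameCycle d v := by
    intro v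
    refine ⟨F (rep v), ⟨hmemD v, ((hF_same (rep v)).symm.trans (hrep_same v).symm)⟩, ?_⟩
    rintro d'' ⟨hd'', hs⟩
    obtain ⟨u, _, rfl⟩ := Finset.mem_image.mp hd''
    have h1 : σ.SameCycle (rep u) v := (hF_same (rep u)).trans hs
    have h2 : rep u = rep v := by
      rw [← hrep_idem u]
      exact hrep_eq (rep u) v h1
    rw [h2]
  -- weight bound on D
  have hwσ : ∀ v : V, 0 ≤ w v (σ v) := fun v => hw v (σ v) (Ne.symm (hσ v))
  have hDbound : ∀ d ∈ D, w d (σ d) ≤ (1 / 4) * ∑ y ∈ (σ.cycleOf d).support, w y (σ y) := by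
    intro d hd
    obtain ⟨u, _, rfl⟩ := Finset.mem_image.mp hd
    have hc : σ.cycleOf (rep u) = σ.cycleOf (F (rep u)) := (hF_same (rep u)).cycleOf_eq
    have := (hFspec (rep u)).2
    rwa [hc] at this
  have hdisj : (↑D : Set V).PairwiseDisjoint (fun d => (σ.cycleOf d).support) := by
    intro a ha b hb hab
    simp only [Function.onFun]
    rw [Finset.disjoint_left]
    intro z hza hzb
    have h1 : σ.SameCycle a z := (Equiv.Perm.mem_support_cycleOf_iff.mp hza).1
    have h2 : σ.SameCycle b z := (Equiv.Perm.mem_support_cycleOf_iff.mp hzb).1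
    have hab' : σ.SameCycle a b := h1.trans h2.symm
    obtain ⟨d, _, hu⟩ := htr b
    exact hab ((hu a ⟨Finset.mem_coe.mp ha, hab'⟩).trans
      (hu b ⟨Finset.mem_coe.mp hb, Equiv.Perm.SameCycle.refl σ b⟩).symm)
  have hsum1 : ∑ d ∈ D, ∑ y ∈ (σ.cycleOf d).support, w y (σ y)
      = ∑ y ∈ D.biUnion (fun d => (σ.cycleOf d).support), w y (σ y) :=
    (Finset.sum_biUnion hdisj).symm
  have hsum2 : ∑ y ∈ D.biUnion (fun d => (σ.cycleOf d).support), w y (σ y)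
      ≤ ∑ v, w v (σ v) :=
    Finset.sum_le_sum_of_subset_of_nonneg (Finset.subset_univ _) (fun v _ _ => hwσ v)
  have hD14 : ∑ d ∈ D, w d (σ d) ≤ (1 / 4) * ∑ v, w v (σ v) := by
    calc ∑ d ∈ D, w d (σ d)
        ≤ ∑ d ∈ D, (1 / 4) * ∑ y ∈ (σ.cycleOf d).support, w y (σ y) :=
          Finset.sum_le_sum hDbound
      _ = (1 / 4) * ∑ d ∈ D, ∑ y ∈ (σ.cycleOf d).support, w y (σ y) := by
          rw [Finset.mul_sum]
      _ ≤ (1 / 4) * ∑ v, w v (σ v) := by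
          rw [hsum1]; linarith [hsum2]
  obtain ⟨τ, hτ1, hτ2, hτ3⟩ := tsp_key w hw D.card σ D le_rfl hσ htr
  refine ⟨τ, hτ1, hτ2, le_trans ?_ hτ3⟩
  have hsplit : ∑ v ∈ D, w v (σ v) + ∑ v ∈ Dᶜ, w v (σ v) = ∑ v, w v (σ v) :=
    Finset.sum_add_sum_compl D _
  linarith
end

section
/- Let σ be a maximum-weight cycle cover of G and let p, q, r be distinct vertices forming a triangle of σ: σ p = q, σ q = r, σ r = p. Then the oppositely oriented triangle is not heavier: w(q,p) + w(r,q) + w(p,r) ≤ w(p,q) + w(q,r) + w(r,p). Consequently, it cannot happen that simultaneously w(p,r) > (1/2)(w(p,q)+w(q,r)) and w(q,p) > (1/2)(w(q,r)+w(r,p)) and w(r,q) > (1/2)(w(p,q)+w(r,p)). -/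
/-- If `σ` is a maximum-weight cycle cover and `p, q, r` are
distinct vertices forming a triangle of `σ` (σ p = q, σ q = r, σ r = p), then
the oppositely oriented triangle is not heavier; consequently the three
strict inequalities listed cannot hold simultaneously. -/
theorem stmt_6 {V : Type*} [Fintype V] [DecidableEq V]
    (hV : 3 ≤ Fintype.card V)
    (w : V → V → ℝ) (hw : ∀ u v : V, u ≠ v → 0 ≤ w u v)
    (σ : Equiv.Perm V) (hσ : ∀ v, σ v ≠ v)
    (hmax : ∀ σ' : Equiv.Perm V, (∀ v, σ' v ≠ v) →
      ∑ v, w v (σ' v) ≤ ∑ v, w v (σ v))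
    (p q r : V) (hpq : p ≠ q) (hqr : q ≠ r) (hrp : r ≠ p)
    (h1 : σ p = q) (h2 : σ q = r) (h3 : σ r = p) :
    (w q p + w r q + w p r ≤ w p q + w q r + w r p) ∧
      ¬ (w p r > (1 / 2) * (w p q + w q r) ∧
         w q p > (1 / 2) * (w q r + w r p) ∧
         w r q > (1 / 2) * (w p q + w r p)) := by
  set τ : Equiv.Perm V := Equiv.swap p q * Equiv.swap q r with hτ
  have hτp : τ p = q := by
    simp [hτ, Equiv.swap_apply_of_ne_of_ne hpq (Ne.symm hrp), Equiv.swap_apply_left]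
  have hτq : τ q = r := by
    simp [hτ, Equiv.swap_apply_left,
      Equiv.swap_apply_of_ne_of_ne hrp (Ne.symm hqr)]
  have hτr : τ r = p := by
    simp [hτ, Equiv.swap_apply_right]
  have hτother : ∀ v, v ≠ p → v ≠ q → v ≠ r → τ v = v := by
    intro v hvp hvq hvr
    simp [hτ, Equiv.swap_apply_of_ne_of_ne, hvp, hvq, hvr]
  set σ' : Equiv.Perm V := σ * τ with hσ'
  have hσ'p : σ' p = r := by simp [hσ', hτp, h2]
  have hσ'q : σ' q = p := by simp [hσ', hτq, h3]
  have hσ'r : σ' r = q := by simp [hσ', hτr, h1]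
  have hfree : ∀ v, σ' v ≠ v := by
    intro v
    by_cases hvp : v = p
    · subst hvp; rw [hσ'p]; exact hrp
    by_cases hvq : v = q
    · subst hvq; rw [hσ'q]; exact hpq
    by_cases hvr : v = r
    · subst hvr; rw [hσ'r]; exact hqr
    · have : σ' v = σ v := by simp [hσ', hτother v hvp hvq hvr]
      rw [this]; exact hσ v
  have key := hmax σ' hfree
  have hsum : ∑ v, w v (σ' v) - ∑ v, w v (σ v)
      = (w p r + w q p + w r q) - (w p q + w q r + w r p) := by
    rw [← Finset.sum_sub_distrib]
    have hsub : ({p, q, r} : Finset V) ⊆ Finset.univ := Finset.subset_univ _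
    rw [← Finset.sum_subset hsub (by
      intro v _ hv
      simp only [Finset.mem_insert, Finset.mem_singleton, not_or] at hv
      obtain ⟨hvp, hvq, hvr⟩ := hv
      have : σ' v = σ v := by simp [hσ', hτother v hvp hvq hvr]
      rw [this, sub_self])]
    rw [Finset.sum_insert (by simp [hpq, Ne.symm hrp]),
        Finset.sum_insert (by simp [hqr]), Finset.sum_singleton]
    rw [hσ'p, hσ'q, hσ'r, h1, h2, h3]
    ring
  have main : w q p + w r q + w p r ≤ w p q + w q r + w r p := by linarith
  refine ⟨main, ?_⟩
  rintro ⟨ha, hb, hc⟩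
  linarith
end

section
/- Let C_max be a maximum-weight cycle cover of G and let C_1 be a cycle cover of G containing no 2-cycle of C_max. Then there exists a cycle cover C'_1 of G containing no 2-cycle of C_max, with w(C'_1) ≥ w(C_1), such that every alternating cycle of C_max ⊕ C'_1 is necessary. -/
/-- The edge set `E(σ) = {(v, σ v) : v ∈ V}` of a permutation. -/
def edgeSet {V : Type*} [Fintype V] [DecidableEq V] (σ : Equiv.Perm V) :
    Finset (V × V) :=
  Finset.univ.image fun v => (v, σ v)

/-- `A` is the edge set of some cycle cover (fixed-point-free permutation). -/
def IsCycleCoverEdges {V : Type*} [Fintype V] [DecidableEq V]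
    (A : Finset (V × V)) : Prop :=
  ∃ σ : Equiv.Perm V, (∀ v, σ v ≠ v) ∧ A = edgeSet σ

/-- `A` is an alternating cycle of `Cmax ⊕ C1`: a minimal nonempty subset of the
symmetric difference `E(Cmax) Δ E(C1)` such that `E(C1) Δ A` is the edge set of
a cycle cover. -/
def IsAltCycle {V : Type*} [Fintype V] [DecidableEq V] (Cmax C1 : Equiv.Perm V)
    (A : Finset (V × V)) : Prop :=
  A.Nonempty ∧ A ⊆ symmDiff (edgeSet Cmax) (edgeSet C1) ∧
    IsCycleCoverEdges (symmDiff (edgeSet C1) A) ∧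
    ∀ B ⊂ A, B.Nonempty → ¬ IsCycleCoverEdges (symmDiff (edgeSet C1) B)

/-- The edge set `F` contains a 2-cycle that also belongs to `Cmax`. -/
def ContainsTwoCycleOfIn {V : Type*} [Fintype V] [DecidableEq V]
    (Cmax : Equiv.Perm V) (F : Finset (V × V)) : Prop :=
  ∃ u v : V, u ≠ v ∧ Cmax u = v ∧ Cmax v = u ∧ (u, v) ∈ F ∧ (v, u) ∈ F

/-- An alternating cycle `A` of `Cmax ⊕ C1` is necessary if the cycle cover
`C1 ⊕ A` contains a 2-cycle that also belongs to `Cmax`. -/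
def NecessaryAlt {V : Type*} [Fintype V] [DecidableEq V] (Cmax C1 : Equiv.Perm V)
    (A : Finset (V × V)) : Prop :=
  ContainsTwoCycleOfIn Cmax (symmDiff (edgeSet C1) A)



set_option linter.unusedSectionVars false

section Aux
variable {V : Type*} [Fintype V] [DecidableEq V]

lemma mem_edgeSet_iff {σ : Equiv.Perm V} {u v : V} :
    (u, v) ∈ edgeSet σ ↔ σ u = v := by
  simp only [edgeSet, Finset.mem_image, Finset.mem_univ, true_and, Prod.mk.injEq]
  constructor
  · rintro ⟨a, rfl, rfl⟩; rfl
  · rintro rfl; exact ⟨u, rfl, rfl⟩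

lemma sum_edgeSet (σ : Equiv.Perm V) (f : V × V → ℝ) :
    ∑ e ∈ edgeSet σ, f e = ∑ v, f (v, σ v) := by
  rw [edgeSet, Finset.sum_image]
  intro x _ y _ h
  exact (Prod.mk.injEq _ _ _ _ ▸ h).1

lemma mem_image_swap {s : Finset (V × V)} {e : V × V} :
    e ∈ s.image Prod.swap ↔ e.swap ∈ s := by
  constructor
  · rintro h
    obtain ⟨e', he', rfl⟩ := Finset.mem_image.1 h
    simpa using he'
  · intro h
    exact Finset.mem_image.2 ⟨e.swap, h, by simp⟩

lemma edgeSet_swap (σ : Equiv.Perm V) :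
    (edgeSet σ).image Prod.swap = edgeSet σ⁻¹ := by
  ext ⟨u, v⟩
  rw [mem_image_swap]
  simp only [Prod.swap_prod_mk, mem_edgeSet_iff]
  constructor
  · rintro rfl; simp
  · rintro rfl; simp

lemma exists_unique_out (α β τ : Equiv.Perm V) (A : Finset (V × V))
    (hA : A ⊆ symmDiff (edgeSet α) (edgeSet β))
    (hτ : symmDiff (edgeSet β) A = edgeSet τ) (v : V) :
    ∃! u, (v, u) ∈ symmDiff (edgeSet α) A := by
  have hout : ∀ u, (v, u) ∈ symmDiff (edgeSet α) A → u = α v ∨ u = β v := by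
    intro u hu
    rcases Finset.mem_symmDiff.1 hu with ⟨h1, _⟩ | ⟨h2, _⟩
    · exact Or.inl (mem_edgeSet_iff.1 h1).symm
    · rcases Finset.mem_symmDiff.1 (hA h2) with ⟨h, _⟩ | ⟨h, _⟩
      · exact Or.inl (mem_edgeSet_iff.1 h).symm
      · exact Or.inr (mem_edgeSet_iff.1 h).symm
  by_cases hco : α v = β v
  · have he1A : (v, α v) ∉ A := by
      intro h
      rcases Finset.mem_symmDiff.1 (hA h) with ⟨_, h2⟩ | ⟨_, h2⟩
      · exact h2 (mem_edgeSet_iff.2 hco.symm)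
      · exact h2 (mem_edgeSet_iff.2 rfl)
    refine ⟨α v, Finset.mem_symmDiff.2 (Or.inl ⟨mem_edgeSet_iff.2 rfl, he1A⟩), ?_⟩
    intro u hu
    rcases hout u hu with h | h
    · exact h
    · exact h.trans hco.symm
  · have hτmem : (v, τ v) ∈ symmDiff (edgeSet β) A := by
      rw [hτ]; exact mem_edgeSet_iff.2 rfl
    have hτv : τ v = α v ∨ τ v = β v := by
      rcases Finset.mem_symmDiff.1 hτmem with ⟨h, _⟩ | ⟨h, _⟩
      · exact Or.inr (mem_edgeSet_iff.1 h).symm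
      · rcases Finset.mem_symmDiff.1 (hA h) with ⟨h', _⟩ | ⟨h', _⟩
        · exact Or.inl (mem_edgeSet_iff.1 h').symm
        · exact Or.inr (mem_edgeSet_iff.1 h').symm
    have he1Y : (v, α v) ∉ edgeSet β := fun h => hco (mem_edgeSet_iff.1 h).symm
    have he2X : (v, β v) ∉ edgeSet α := fun h => hco (mem_edgeSet_iff.1 h)
    have he1τ : (v, α v) ∈ A ↔ τ v = α v := by
      constructor
      · intro h
        have : (v, α v) ∈ edgeSet τ := by
          rw [← hτ]; exact Finset.mem_symmDiff.2 (Or.inr ⟨h, he1Y⟩)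
        exact mem_edgeSet_iff.1 this
      · intro h
        have : (v, α v) ∈ symmDiff (edgeSet β) A := by
          rw [hτ]; exact mem_edgeSet_iff.2 h
        rcases Finset.mem_symmDiff.1 this with ⟨h1, _⟩ | ⟨h1, _⟩
        · exact absurd h1 he1Y
        · exact h1
    have he2τ : (v, β v) ∉ A ↔ τ v = β v := by
      constructor
      · intro h
        have : (v, β v) ∈ edgeSet τ := by
          rw [← hτ]; exact Finset.mem_symmDiff.2 (Or.inl ⟨mem_edgeSet_iff.2 rfl, h⟩)
        exact mem_edgeSet_iff.1 this
      · intro h hmem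
        have : (v, β v) ∈ symmDiff (edgeSet β) A := by
          rw [hτ]; exact mem_edgeSet_iff.2 h
        rcases Finset.mem_symmDiff.1 this with ⟨_, h2⟩ | ⟨_, h2⟩
        · exact h2 hmem
        · exact h2 (mem_edgeSet_iff.2 rfl)
    rcases hτv with h | h
    · have ha : (v, α v) ∈ A := he1τ.2 h
      have hb : (v, β v) ∈ A := by
        by_contra hb
        exact hco (h.symm.trans (he2τ.1 hb))
      refine ⟨β v, Finset.mem_symmDiff.2 (Or.inr ⟨hb, he2X⟩), ?_⟩
      intro u hu
      rcases hout u hu with h' | h'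
      · exfalso
        subst h'
        rcases Finset.mem_symmDiff.1 hu with ⟨_, h2⟩ | ⟨_, h2⟩
        · exact h2 ha
        · exact h2 (mem_edgeSet_iff.2 rfl)
      · exact h'
    · have hb : (v, β v) ∉ A := he2τ.2 h
      have ha : (v, α v) ∉ A := fun h' => hco ((he1τ.1 h').symm.trans h)
      refine ⟨α v, Finset.mem_symmDiff.2 (Or.inl ⟨mem_edgeSet_iff.2 rfl, ha⟩), ?_⟩
      intro u hu
      rcases hout u hu with h' | h'
      · exact h'
      · exfalso
        subst h'
        rcases Finset.mem_symmDiff.1 hu with ⟨h1, _⟩ | ⟨h1, _⟩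
        · exact he2X h1
        · exact hb h1

lemma exists_unique_in (α β τ : Equiv.Perm V) (A : Finset (V × V))
    (hA : A ⊆ symmDiff (edgeSet α) (edgeSet β))
    (hτ : symmDiff (edgeSet β) A = edgeSet τ) (u : V) :
    ∃! v, (v, u) ∈ symmDiff (edgeSet α) A := by
  have hswap : Function.Injective (Prod.swap : V × V → V × V) :=
    Prod.swap_injective
  have hA' : A.image Prod.swap ⊆ symmDiff (edgeSet α⁻¹) (edgeSet β⁻¹) := by
    rw [← edgeSet_swap, ← edgeSet_swap, ← Finset.image_symmDiff _ _ hswap]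
    exact Finset.image_subset_image hA
  have hτ' : symmDiff (edgeSet β⁻¹) (A.image Prod.swap) = edgeSet τ⁻¹ := by
    rw [← edgeSet_swap, ← edgeSet_swap, ← Finset.image_symmDiff _ _ hswap, hτ]
  obtain ⟨x, hx, hxu⟩ := exists_unique_out α⁻¹ β⁻¹ τ⁻¹ (A.image Prod.swap) hA' hτ' u
  have key : ∀ y, ((u, y) ∈ symmDiff (edgeSet α⁻¹) (A.image Prod.swap) ↔
      (y, u) ∈ symmDiff (edgeSet α) A) := by
    intro y
    rw [← edgeSet_swap, ← Finset.image_symmDiff _ _ hswap, mem_image_swap]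
    rfl
  exact ⟨x, (key x).1 hx, fun y hy => hxu y ((key y).2 hy)⟩

lemma alt_transfer (α β τ : Equiv.Perm V) (A : Finset (V × V))
    (hA : A ⊆ symmDiff (edgeSet α) (edgeSet β))
    (hτ : symmDiff (edgeSet β) A = edgeSet τ) :
    ∃ ρ : Equiv.Perm V, edgeSet ρ = symmDiff (edgeSet α) A := by
  have hout := fun v => exists_unique_out α β τ A hA hτ v
  have hin := fun u => exists_unique_in α β τ A hA hτ u
  let f : V → V := fun v => (hout v).choose
  let g : V → V := fun u => (hin u).choose
  have hf : ∀ v, (v, f v) ∈ symmDiff (edgeSet α) A := fun v => (hout v).choose_spec.1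
  have hg : ∀ u, (g u, u) ∈ symmDiff (edgeSet α) A := fun u => (hin u).choose_spec.1
  have hgf : ∀ v, g (f v) = v := fun v => ((hin (f v)).choose_spec.2 v (hf v)).symm
  have hfg : ∀ u, f (g u) = u := fun u => ((hout (g u)).choose_spec.2 u (hg u)).symm
  refine ⟨⟨f, g, hgf, hfg⟩, ?_⟩
  ext ⟨v, u⟩
  rw [mem_edgeSet_iff]
  constructor
  · rintro rfl; exact hf v
  · intro h; exact ((hout v).choose_spec.2 u h).symm

lemma sum_symmDiff_add {X Y A : Finset (V × V)} (hA : A ⊆ symmDiff X Y)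
    (f : V × V → ℝ) :
    ∑ e ∈ symmDiff X A, f e + ∑ e ∈ symmDiff Y A, f e
      = ∑ e ∈ X, f e + ∑ e ∈ Y, f e := by
  have hAX : A \ X = A ∩ Y := by
    ext e
    have := @hA e
    simp only [Finset.mem_sdiff, Finset.mem_inter, Finset.mem_symmDiff] at *
    tauto
  have hAY : A \ Y = A ∩ X := by
    ext e
    have := @hA e
    simp only [Finset.mem_sdiff, Finset.mem_inter, Finset.mem_symmDiff] at *
    tauto
  have hsplit : ∀ S : Finset (V × V),
      ∑ e ∈ symmDiff S A, f e = ∑ e ∈ S \ A, f e + ∑ e ∈ A \ S, f e := by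
    intro S
    rw [symmDiff_def]
    exact Finset.sum_union (disjoint_sdiff_sdiff)
  have h1 := Finset.sum_inter_add_sum_sdiff X A f
  have h2 := Finset.sum_inter_add_sum_sdiff Y A f
  have h3 : A ∩ X = X ∩ A := Finset.inter_comm _ _
  have h4 : A ∩ Y = Y ∩ A := Finset.inter_comm _ _
  rw [hsplit X, hsplit Y, hAX, hAY, h3, h4]
  linarith

end Aux

/-- If `Cmax` is a maximum-weight cycle cover and `C1` is a cycle
cover containing no 2-cycle of `Cmax`, then there is a cycle cover `C1'`
containing no 2-cycle of `Cmax`, with `w(C1') ≥ w(C1)`, all of whose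
alternating cycles in `Cmax ⊕ C1'` are necessary. -/
theorem stmt_8 {V : Type*} [Fintype V] [DecidableEq V]
    (hV : 2 ≤ Fintype.card V)
    (w : V → V → ℝ) (hw : ∀ u v : V, u ≠ v → 0 ≤ w u v)
    (Cmax : Equiv.Perm V) (hCmax : ∀ v, Cmax v ≠ v)
    (hmax : ∀ σ' : Equiv.Perm V, (∀ v, σ' v ≠ v) →
      ∑ v, w v (σ' v) ≤ ∑ v, w v (Cmax v))
    (C1 : Equiv.Perm V) (hC1 : ∀ v, C1 v ≠ v)
    (hno2 : ¬ ContainsTwoCycleOfIn Cmax (edgeSet C1)) :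
    ∃ C1' : Equiv.Perm V, (∀ v, C1' v ≠ v) ∧
      ¬ ContainsTwoCycleOfIn Cmax (edgeSet C1') ∧
      ∑ v, w v (C1 v) ≤ ∑ v, w v (C1' v) ∧
      ∀ A : Finset (V × V), IsAltCycle Cmax C1' A → NecessaryAlt Cmax C1' A := by
  classical
  set S : Finset (Equiv.Perm V) := Finset.univ.filter
    (fun σ => (∀ v, σ v ≠ v) ∧ ¬ ContainsTwoCycleOfIn Cmax (edgeSet σ)) with hS
  have hmemS : ∀ σ : Equiv.Perm V,
      σ ∈ S ↔ (∀ v, σ v ≠ v) ∧ ¬ ContainsTwoCycleOfIn Cmax (edgeSet σ) := by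
    intro σ; simp [hS]
  have hC1S : C1 ∈ S := (hmemS C1).2 ⟨hC1, hno2⟩
  obtain ⟨C0, hC0S, hC0max⟩ := S.exists_max_image (fun σ => ∑ v, w v (σ v)) ⟨C1, hC1S⟩
  set S' : Finset (Equiv.Perm V) :=
    S.filter (fun σ => ∑ v, w v (C0 v) ≤ ∑ v, w v (σ v)) with hS'
  have hC0S' : C0 ∈ S' := by simp [hS', hC0S]
  obtain ⟨C1', hC1'S', hC1'min⟩ := S'.exists_min_image
    (fun σ => (symmDiff (edgeSet Cmax) (edgeSet σ)).card) ⟨C0, hC0S'⟩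
  have hC1'S : C1' ∈ S := (Finset.mem_filter.1 hC1'S').1
  have hwC0le : ∑ v, w v (C0 v) ≤ ∑ v, w v (C1' v) := by
    have := (Finset.mem_filter.1 hC1'S').2
    simpa using this
  obtain ⟨hC1'fpf, hC1'no2⟩ := (hmemS C1').1 hC1'S
  refine ⟨C1', hC1'fpf, hC1'no2, le_trans (hC0max C1 hC1S) hwC0le, ?_⟩
  intro A hAalt
  by_contra hnec
  obtain ⟨hAne, hAsub, ⟨τ, hτfpf, hτeq⟩, -⟩ := hAalt
  -- τ has no 2-cycle of Cmax
  have hτno2 : ¬ ContainsTwoCycleOfIn Cmax (edgeSet τ) := by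
    rw [← hτeq]; exact hnec
  have hτS : τ ∈ S := (hmemS τ).2 ⟨hτfpf, hτno2⟩
  -- transfer A to Cmax
  obtain ⟨ρ, hρeq⟩ := alt_transfer Cmax C1' τ A hAsub hτeq
  have hρfpf : ∀ v, ρ v ≠ v := by
    intro v hv
    have hmem : (v, v) ∈ symmDiff (edgeSet Cmax) A := by
      rw [← hρeq]
      exact mem_edgeSet_iff.2 hv
    rcases Finset.mem_symmDiff.1 hmem with ⟨h1, _⟩ | ⟨h1, _⟩
    · exact hCmax v (mem_edgeSet_iff.1 h1)
    · rcases Finset.mem_symmDiff.1 (hAsub h1) with ⟨h2, _⟩ | ⟨h2, _⟩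
      · exact hCmax v (mem_edgeSet_iff.1 h2)
      · exact hC1'fpf v (mem_edgeSet_iff.1 h2)
  -- weight identity
  have hid : ∑ v, w v (ρ v) + ∑ v, w v (τ v)
      = ∑ v, w v (Cmax v) + ∑ v, w v (C1' v) := by
    have := sum_symmDiff_add hAsub (fun e => w e.1 e.2)
    rw [← hρeq, hτeq] at this
    simpa [sum_edgeSet] using this
  have hρle : ∑ v, w v (ρ v) ≤ ∑ v, w v (Cmax v) := hmax ρ hρfpf
  have hτge : ∑ v, w v (C1' v) ≤ ∑ v, w v (τ v) := by linarith
  have hτS' : τ ∈ S' := by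
    rw [hS', Finset.mem_filter]
    exact ⟨hτS, le_trans hwC0le hτge⟩
  -- cardinality contradiction
  have hcard := hC1'min τ hτS'
  have hsd : symmDiff (edgeSet Cmax) (edgeSet τ)
      = symmDiff (edgeSet Cmax) (edgeSet C1') \ A := by
    rw [← hτeq, ← symmDiff_assoc, symmDiff_of_ge hAsub]
  rw [hsd] at hcard
  have hlt : (symmDiff (edgeSet Cmax) (edgeSet C1') \ A).card
      < (symmDiff (edgeSet Cmax) (edgeSet C1')).card :=
    Finset.card_lt_card (Finset.sdiff_ssubset hAsub hAne)
  omega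
end

section
/- For every perfect matching M of the graph G', the induced set of half-edges C̃ (where (u, x_(u,v)) ∈ C̃ iff the edge {u_out, e¹_uv} ∈ M, and (x_(u,v), v) ∈ C̃ iff the edge {v_in, e²_uv} ∈ M) satisfies: (i) each vertex of V has exactly one outgoing and exactly one incoming half-edge in C̃; (ii) for each 2-cycle of C_max on vertices u and v, C̃ contains at most two of the four half-edges (u, x_(u,v)), (x_(u,v), v), (v, x_(v,u)), (x_(v,u), u), and moreover if C̃ contains one half-edge of (u,v) and one half-edge of (v,u), then one of them is incident with u and the other with v. That is, any perfect matching of G' yields a relaxed cycle cover improving C_max. -/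
/-- Vertices of the auxiliary undirected graph `G'`: for every vertex `v` of
`G` the vertices `v_in`, `v_out`; for every ordered pair `(u,v)` the vertices
`e¹_uv`, `e²_uv`; and gadget vertices `a_{u,v}`, `b_{u,v}` (used only for
2-cycles of `C_max`, represented with `u < v`). -/
inductive GV (V : Type*) where
  | vin : V → GV V
  | vout : V → GV V
  | e1 : V → V → GV V
  | e2 : V → V → GV V
  | a : V → V → GV V
  | b : V → V → GV V
  deriving DecidableEq

/-- Membership in the vertex set `V'` of `G'` (for `a`/`b` vertices we use the
canonical representative with `u < v`). -/
def GVmem {V : Type*} [LinearOrder V] (Cmax : Equiv.Perm V) : GV V → Prop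
  | .vin _ => True
  | .vout _ => True
  | .e1 u v => u ≠ v
  | .e2 u v => u ≠ v
  | .a u v => u < v ∧ Cmax u = v ∧ Cmax v = u
  | .b u v => u < v ∧ Cmax u = v ∧ Cmax v = u

/-- The edges of `G'` (each undirected edge represented in a canonical
orientation): `{e¹_uv, e²_uv}`, `{u_out, e¹_uv}`, `{v_in, e²_uv}` for each edge
`(u,v)` of `G`, and for every 2-cycle of `C_max` on `u < v` the gadget edges
`{a_{u,v}, e¹_uv}`, `{a_{u,v}, e²_vu}`, `{b_{u,v}, e¹_vu}`, `{b_{u,v}, e²_uv}`. -/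
def IsEdgeG' {V : Type*} [LinearOrder V] (Cmax : Equiv.Perm V) :
    GV V → GV V → Prop
  | .e1 u v, .e2 u' v' => u = u' ∧ v = v' ∧ u ≠ v
  | .vout u, .e1 u' v => u = u' ∧ u ≠ v
  | .vin v, .e2 u v' => v = v' ∧ u ≠ v
  | .a u v, .e1 u' v' => u = u' ∧ v = v' ∧ u < v ∧ Cmax u = v ∧ Cmax v = u
  | .a u v, .e2 v' u' => v = v' ∧ u = u' ∧ u < v ∧ Cmax u = v ∧ Cmax v = u
  | .b u v, .e1 v' u' => v = v' ∧ u = u' ∧ u < v ∧ Cmax u = v ∧ Cmax v = u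
  | .b u v, .e2 u' v' => u = u' ∧ v = v' ∧ u < v ∧ Cmax u = v ∧ Cmax v = u
  | _, _ => False

/-- A perfect matching of `G'`: a set of (canonically oriented) edges of `G'`
such that every vertex of `V'` lies in exactly one of them. -/
def IsPerfectMatching {V : Type*} [LinearOrder V] (Cmax : Equiv.Perm V)
    (M : Finset (GV V × GV V)) : Prop :=
  (∀ p ∈ M, IsEdgeG' Cmax p.1 p.2) ∧
    ∀ x : GV V, GVmem Cmax x → ∃! p : GV V × GV V, p ∈ M ∧ (p.1 = x ∨ p.2 = x)

section Aux

variable {V : Type*} [LinearOrder V] {Cmax : Equiv.Perm V}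

lemma snd_not_vout {x : GV V} {v : V} (h : IsEdgeG' Cmax x (GV.vout v)) : False := by
  cases x <;> exact h

lemma snd_not_vin {x : GV V} {v : V} (h : IsEdgeG' Cmax x (GV.vin v)) : False := by
  cases x <;> exact h

lemma snd_not_a {x : GV V} {u v : V} (h : IsEdgeG' Cmax x (GV.a u v)) : False := by
  cases x <;> exact h

lemma snd_not_b {x : GV V} {u v : V} (h : IsEdgeG' Cmax x (GV.b u v)) : False := by
  cases x <;> exact h

lemma edge_vout {v : V} {y : GV V} (h : IsEdgeG' Cmax (GV.vout v) y) :
    ∃ u, y = GV.e1 v u := by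
  cases y with
  | e1 u' v' => exact ⟨v', by rw [h.1]⟩
  | _ => exact h.elim

lemma edge_vin {v : V} {y : GV V} (h : IsEdgeG' Cmax (GV.vin v) y) :
    ∃ u, y = GV.e2 u v := by
  cases y with
  | e2 u' v' => exact ⟨u', by rw [h.1]⟩
  | _ => exact h.elim

lemma edge_a {u v : V} {y : GV V} (h : IsEdgeG' Cmax (GV.a u v) y) :
    y = GV.e1 u v ∨ y = GV.e2 v u := by
  cases y with
  | e1 u' v' => exact Or.inl (by rw [h.1, h.2.1])
  | e2 v' u' => exact Or.inr (by rw [h.1, h.2.1])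
  | _ => exact h.elim

lemma edge_b {u v : V} {y : GV V} (h : IsEdgeG' Cmax (GV.b u v) y) :
    y = GV.e1 v u ∨ y = GV.e2 u v := by
  cases y with
  | e1 v' u' => exact Or.inl (by rw [h.1, h.2.1])
  | e2 u' v' => exact Or.inr (by rw [h.1, h.2.1])
  | _ => exact h.elim

lemma no_share {M : Finset (GV V × GV V)} (hM : IsPerfectMatching Cmax M)
    {p q : GV V × GV V} {x : GV V} (hp : p ∈ M) (hq : q ∈ M)
    (hx : GVmem Cmax x) (hpx : p.1 = x ∨ p.2 = x) (hqx : q.1 = x ∨ q.2 = x) :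
    p = q := by
  obtain ⟨r, -, hr⟩ := hM.2 x hx
  rw [hr p ⟨hp, hpx⟩, hr q ⟨hq, hqx⟩]

end Aux

/-- every perfect matching `M` of `G'` yields a relaxed cycle
cover improving `C_max`.  Here the half-edge `(u, x_(u,v))` belongs to `C̃` iff
`{u_out, e¹_uv} ∈ M` and the half-edge `(x_(u,v), v)` belongs to `C̃` iff
`{v_in, e²_uv} ∈ M`.  Conclusion (i): every vertex has exactly one outgoing and
one incoming half-edge in `C̃`.  Conclusion (ii): for every 2-cycle of `C_max`
on `u, v`, at most two of the four half-edges of `(u,v)`, `(v,u)` are in `C̃`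
(no three of them simultaneously), and if `C̃` contains one half-edge of
`(u,v)` and one of `(v,u)`, then one is incident with `u` and the other with
`v` (they are never both incident with the same vertex). -/
theorem stmt_9 {V : Type*} [Fintype V] [LinearOrder V]
    (hV : 2 ≤ Fintype.card V)
    (w : V → V → ℝ) (hw : ∀ u v : V, u ≠ v → 0 ≤ w u v)
    (Cmax : Equiv.Perm V) (hCmax : ∀ v, Cmax v ≠ v)
    (hmax : ∀ σ' : Equiv.Perm V, (∀ v, σ' v ≠ v) →
      ∑ v, w v (σ' v) ≤ ∑ v, w v (Cmax v))
    (M : Finset (GV V × GV V)) (hM : IsPerfectMatching Cmax M) :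
    (∀ v : V, (∃! u : V, (GV.vout v, GV.e1 v u) ∈ M) ∧
       (∃! u : V, (GV.vin v, GV.e2 u v) ∈ M)) ∧
    (∀ u v : V, u ≠ v → Cmax u = v → Cmax v = u →
      (¬ ((GV.vout u, GV.e1 u v) ∈ M ∧ (GV.vin v, GV.e2 u v) ∈ M ∧
            (GV.vout v, GV.e1 v u) ∈ M) ∧
       ¬ ((GV.vout u, GV.e1 u v) ∈ M ∧ (GV.vin v, GV.e2 u v) ∈ M ∧
            (GV.vin u, GV.e2 v u) ∈ M) ∧
       ¬ ((GV.vout u, GV.e1 u v) ∈ M ∧ (GV.vout v, GV.e1 v u) ∈ M ∧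
            (GV.vin u, GV.e2 v u) ∈ M) ∧
       ¬ ((GV.vin v, GV.e2 u v) ∈ M ∧ (GV.vout v, GV.e1 v u) ∈ M ∧
            (GV.vin u, GV.e2 v u) ∈ M)) ∧
      ¬ ((GV.vout u, GV.e1 u v) ∈ M ∧ (GV.vin u, GV.e2 v u) ∈ M) ∧
      ¬ ((GV.vin v, GV.e2 u v) ∈ M ∧ (GV.vout v, GV.e1 v u) ∈ M)) := by
  constructor
  · intro v
    constructor
    · obtain ⟨⟨p1, p2⟩, ⟨hpM, hpx⟩, hpu⟩ := hM.2 (GV.vout v) trivial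
      have hedge := hM.1 _ hpM
      rcases hpx with h1 | h2
      · simp only at h1 hedge
        subst h1
        obtain ⟨u, hu⟩ := edge_vout hedge
        subst hu
        refine ⟨u, hpM, fun u' hu' => ?_⟩
        have := hpu (GV.vout v, GV.e1 v u') ⟨hu', Or.inl rfl⟩
        exact (GV.e1.injEq ..).mp (congrArg Prod.snd this) |>.2
      · simp only at h2; rw [h2] at hedge; exact (snd_not_vout hedge).elim
    · obtain ⟨⟨p1, p2⟩, ⟨hpM, hpx⟩, hpu⟩ := hM.2 (GV.vin v) trivial
      have hedge := hM.1 _ hpM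
      rcases hpx with h1 | h2
      · simp only at h1 hedge
        subst h1
        obtain ⟨u, hu⟩ := edge_vin hedge
        subst hu
        refine ⟨u, hpM, fun u' hu' => ?_⟩
        have := hpu (GV.vin v, GV.e2 u' v) ⟨hu', Or.inl rfl⟩
        exact (GV.e2.injEq ..).mp (congrArg Prod.snd this) |>.1
      · simp only at h2; rw [h2] at hedge; exact (snd_not_vin hedge).elim
  · have pair1 : ∀ u v : V, u ≠ v → Cmax u = v → Cmax v = u →
        ¬ ((GV.vout u, GV.e1 u v) ∈ M ∧ (GV.vin u, GV.e2 v u) ∈ M) := by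
      rintro u v hne hcu hcv ⟨h1, h2⟩
      rcases lt_or_gt_of_ne hne with hlt | hgt
      · obtain ⟨⟨p1, p2⟩, ⟨hpM, hpx⟩, -⟩ :=
          hM.2 (GV.a u v) (⟨hlt, hcu, hcv⟩ : GVmem Cmax (GV.a u v))
        have hedge := hM.1 _ hpM
        rcases hpx with hp1 | hp2
        · simp only at hp1; subst hp1
          rcases edge_a hedge with h | h <;> subst h
          · have := no_share hM hpM h1 (show GVmem Cmax (GV.e1 u v) from hne)
              (Or.inr rfl) (Or.inr rfl)
            exact absurd (congrArg Prod.fst this) (by simp)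
          · have := no_share hM hpM h2 (show GVmem Cmax (GV.e2 v u) from hne.symm)
              (Or.inr rfl) (Or.inr rfl)
            exact absurd (congrArg Prod.fst this) (by simp)
        · simp only at hp2; rw [hp2] at hedge; exact snd_not_a hedge
      · obtain ⟨⟨p1, p2⟩, ⟨hpM, hpx⟩, -⟩ :=
          hM.2 (GV.b v u) (⟨hgt, hcv, hcu⟩ : GVmem Cmax (GV.b v u))
        have hedge := hM.1 _ hpM
        rcases hpx with hp1 | hp2
        · simp only at hp1; subst hp1
          rcases edge_b hedge with h | h <;> subst h
          · have := no_share hM hpM h1 (show GVmem Cmax (GV.e1 u v) from hne)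
              (Or.inr rfl) (Or.inr rfl)
            exact absurd (congrArg Prod.fst this) (by simp)
          · have := no_share hM hpM h2 (show GVmem Cmax (GV.e2 v u) from hne.symm)
              (Or.inr rfl) (Or.inr rfl)
            exact absurd (congrArg Prod.fst this) (by simp)
        · simp only at hp2; rw [hp2] at hedge; exact snd_not_b hedge
    intro u v hne hcu hcv
    have P1 := pair1 u v hne hcu hcv
    have P2 : ¬ ((GV.vin v, GV.e2 u v) ∈ M ∧ (GV.vout v, GV.e1 v u) ∈ M) :=
      fun h => pair1 v u hne.symm hcv hcu ⟨h.2, h.1⟩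
    exact ⟨⟨fun h => P2 ⟨h.2.1, h.2.2⟩, fun h => P1 ⟨h.1, h.2.2⟩,
      fun h => P1 ⟨h.1, h.2.2⟩, fun h => P2 ⟨h.1, h.2.1⟩⟩, P1, P2⟩
end

section
/- Assume |V| ≥ 3. For every Hamiltonian tour τ of G there exists a perfect matching of G' whose weight equals w(τ). Consequently, a maximum-weight perfect matching of G' has weight at least OPT, the maximum weight of a tour. -/
/-- The weight of a (canonically oriented) edge of `G'`: the edges
`{u_out, e¹_uv}` and `{v_in, e²_uv}` have weight `w(u,v)/2`, all other edges
have weight `0`. -/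
noncomputable def ewt {V : Type*} [DecidableEq V] (w : V → V → ℝ) : GV V × GV V → ℝ
  | (.vout u, .e1 u' v) => if u = u' then w u v / 2 else 0
  | (.vin v, .e2 u v') => if v = v' then w u v / 2 else 0
  | _ => 0

/-!
The matching is described by its mate function. On the gadget of an edge `(u, v)` of the tour,
`u_out` and `v_in` take `e¹_uv` and `e²_uv`, so the tour edges carry all the weight, half on
each side. Every other gadget is matched internally, except that the vertices `a_{u,v}`,
`b_{u,v}` of a 2-cycle `{u, v}` of `C_max` (with `u < v`) take the two ends of the gadget of
`(u, v)`, or of `(v, u)` when the tour uses `(u, v)`. This is consistent because a Hamiltonian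
cycle on at least three vertices never uses both `(u, v)` and `(v, u)`.
-/

namespace Equiv.Perm

theorem IsCycle.apply_apply_ne {α : Type*} [Fintype α] [DecidableEq α] {f : Perm α}
    (hf : f.IsCycle) (h3 : 3 ≤ f.support.card) {x : α} (hx : f x ≠ x) : f (f x) ≠ x := by
  intro hx2
  have hsq : f ^ 2 = 1 := (hf.pow_eq_one_iff' hx).2 (by rwa [sq, mul_apply])
  have := Nat.le_of_dvd two_pos (orderOf_dvd_of_pow_eq_one hsq)
  rw [hf.orderOf] at this
  omega

end Equiv.Perm

namespace GV

variable {V : Type*}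

def equivSum : GV V ≃ V ⊕ V ⊕ (V × V) ⊕ (V × V) ⊕ (V × V) ⊕ (V × V) where
  toFun
    | vin v => .inl v
    | vout v => .inr (.inl v)
    | e1 u v => .inr (.inr (.inl (u, v)))
    | e2 u v => .inr (.inr (.inr (.inl (u, v))))
    | a u v => .inr (.inr (.inr (.inr (.inl (u, v)))))
    | b u v => .inr (.inr (.inr (.inr (.inr (u, v)))))
  invFun
    | .inl v => vin v
    | .inr (.inl v) => vout v
    | .inr (.inr (.inl (u, v))) => e1 u v
    | .inr (.inr (.inr (.inl (u, v)))) => e2 u v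
    | .inr (.inr (.inr (.inr (.inl (u, v))))) => a u v
    | .inr (.inr (.inr (.inr (.inr (u, v))))) => b u v
  left_inv x := by cases x <;> rfl
  right_inv s := by rcases s with _ | _ | ⟨_, _⟩ | ⟨_, _⟩ | ⟨_, _⟩ | ⟨_, _⟩ <;> rfl

instance [Fintype V] : Fintype (GV V) := Fintype.ofEquiv _ equivSum.symm

theorem sum_eq_of_support_vin_vout [Fintype V] {M : Type*} [AddCommMonoid M] (h : GV V → M)
    (hsupp : ∀ x, h x ≠ 0 → (∃ v, x = vin v) ∨ ∃ v, x = vout v) :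
    ∑ x, h x = ∑ v, h (vin v) + ∑ v, h (vout v) := by
  rw [← equivSum.symm.sum_comp]
  have hzero : ∀ x, (∀ v, x ≠ vin v) → (∀ v, x ≠ vout v) → h x = 0 := fun x hin hout =>
    not_not.mp fun hx => (hsupp x hx).elim (fun ⟨v, hv⟩ => hin v hv) fun ⟨v, hv⟩ => hout v hv
  simp [Fintype.sum_sum_type, equivSum, hzero]

end GV

section Matching

variable {V : Type*} [LinearOrder V] {Cmax : Equiv.Perm V}

theorem IsEdgeG'.asymm {x y : GV V} (h : IsEdgeG' Cmax x y) : ¬IsEdgeG' Cmax y x := by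
  cases x <;> cases y <;> simp_all [IsEdgeG']

theorem IsEdgeG'.mem_left {x y : GV V} (h : IsEdgeG' Cmax x y) : GVmem Cmax x := by
  cases x <;> cases y <;> simp only [IsEdgeG', GVmem] at h ⊢ <;> grind

theorem ewt_ne_zero {w : V → V → ℝ} {p : GV V × GV V} (h : ewt w p ≠ 0) :
    (∃ v, p.1 = .vin v) ∨ ∃ v, p.1 = .vout v := by
  rcases p with ⟨_ | _ | _ | _ | _ | _, _⟩ <;> simp_all [ewt]

variable [Fintype V]

variable (Cmax) in
open Classical in
noncomputable def matchingOf (f : GV V → GV V) : Finset (GV V × GV V) :=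
  (Finset.univ.filter fun x => IsEdgeG' Cmax x (f x)).image fun x => (x, f x)

theorem mem_matchingOf {f : GV V → GV V} {p : GV V × GV V} :
    p ∈ matchingOf Cmax f ↔ IsEdgeG' Cmax p.1 p.2 ∧ p.2 = f p.1 := by
  constructor
  · simp only [matchingOf, Finset.mem_image, Finset.mem_filter, Finset.mem_univ, true_and]
    rintro ⟨x, hx, rfl⟩
    exact ⟨hx, rfl⟩
  · rintro ⟨hp, hfp⟩
    exact Finset.mem_image.2 ⟨p.1, by simpa [← hfp] using hp, by rw [← hfp]⟩

theorem isPerfectMatching_matchingOf {f : GV V → GV V}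
    (hinv : ∀ x, GVmem Cmax x → f (f x) = x)
    (hadj : ∀ x, GVmem Cmax x → IsEdgeG' Cmax x (f x) ∨ IsEdgeG' Cmax (f x) x) :
    IsPerfectMatching Cmax (matchingOf Cmax f) := by
  classical
  refine ⟨fun p hp => (mem_matchingOf.1 hp).1, fun x hx => ?_⟩
  let p₀ := if IsEdgeG' Cmax x (f x) then (x, f x) else (f x, x)
  suffices key : ∀ p, (p ∈ matchingOf Cmax f ∧ (p.1 = x ∨ p.2 = x)) ↔ p = p₀ from
    ⟨p₀, (key p₀).2 rfl, fun p hp => (key p).1 hp⟩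
  rintro ⟨y, z⟩
  simp only [mem_matchingOf]
  constructor
  · rintro ⟨⟨hyz, rfl⟩, rfl | rfl⟩
    · simp [p₀, hyz]
    · simp only [p₀, hinv y hyz.mem_left, if_neg hyz.asymm]
  · by_cases hx' : IsEdgeG' Cmax x (f x)
    · simp only [p₀, if_pos hx', Prod.mk.injEq]
      rintro ⟨rfl, rfl⟩
      exact ⟨⟨hx', rfl⟩, .inl rfl⟩
    · simp only [p₀, if_neg hx', Prod.mk.injEq]
      rintro ⟨rfl, rfl⟩
      exact ⟨⟨(hadj _ hx).resolve_left hx', (hinv _ hx).symm⟩, .inr rfl⟩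

theorem sum_ewt_matchingOf (w : V → V → ℝ) {f : GV V → GV V}
    (hin : ∀ v, IsEdgeG' Cmax (.vin v) (f (.vin v)))
    (hout : ∀ v, IsEdgeG' Cmax (.vout v) (f (.vout v))) :
    ∑ p ∈ matchingOf Cmax f, ewt w p =
      ∑ v, ewt w (.vin v, f (.vin v)) + ∑ v, ewt w (.vout v, f (.vout v)) := by
  classical
  rw [matchingOf, Finset.sum_image (by simp), Finset.sum_filter,
    GV.sum_eq_of_support_vin_vout]
  · simp only [if_pos (hin _), if_pos (hout _)]
  · intro x hx
    by_cases he : IsEdgeG' Cmax x (f x)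
    · simpa using ewt_ne_zero (by simpa [he] using hx)
    · simp [he] at hx

end Matching

section TourMatching

variable {V : Type*} [LinearOrder V] (Cmax τ : Equiv.Perm V)

abbrev IsTwoCyclePair (u v : V) : Prop := u < v ∧ Cmax u = v ∧ Cmax v = u

def tourMate : GV V → GV V
  | .vout u => .e1 u (τ u)
  | .vin v => .e2 (τ.symm v) v
  | .e1 u v =>
    if τ u = v then .vout u
    else if IsTwoCyclePair Cmax u v then .a u v
    else if IsTwoCyclePair Cmax v u ∧ τ v = u then .b v u
    else .e2 u v
  | .e2 u v =>
    if τ u = v then .vin v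
    else if IsTwoCyclePair Cmax u v then .b u v
    else if IsTwoCyclePair Cmax v u ∧ τ v = u then .a v u
    else .e1 u v
  | .a u v => if τ u = v then .e2 v u else .e1 u v
  | .b u v => if τ u = v then .e1 v u else .e2 u v

variable {Cmax τ}

theorem tourMate_tourMate (hτ₂ : ∀ z, τ (τ z) ≠ z) {x : GV V} (hx : GVmem Cmax x) :
    tourMate Cmax τ (tourMate Cmax τ x) = x := by
  cases x with
  | vin v => simp [tourMate]
  | vout u => simp [tourMate]
  | _ =>
    simp only [tourMate]
    split_ifs <;> grind [GVmem, Equiv.symm_apply_eq]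

theorem tourMate_adj (hτ : ∀ z, τ z ≠ z) {x : GV V} (hx : GVmem Cmax x) :
    IsEdgeG' Cmax x (tourMate Cmax τ x) ∨ IsEdgeG' Cmax (tourMate Cmax τ x) x := by
  cases x <;> simp only [GVmem] at hx <;> simp only [tourMate] <;> (try split_ifs) <;>
    simp only [IsEdgeG'] <;> grind [Equiv.apply_symm_apply]

variable [Fintype V]

theorem isPerfectMatching_tourMate (hτ : ∀ z, τ z ≠ z) (hτ₂ : ∀ z, τ (τ z) ≠ z) :
    IsPerfectMatching Cmax (matchingOf Cmax (tourMate Cmax τ)) :=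
  isPerfectMatching_matchingOf (fun _ => tourMate_tourMate hτ₂) (fun _ => tourMate_adj hτ)

theorem sum_ewt_tourMate (hτ : ∀ z, τ z ≠ z) (w : V → V → ℝ) :
    ∑ p ∈ matchingOf Cmax (tourMate Cmax τ), ewt w p = ∑ v, w v (τ v) := by
  have hin (v : V) : IsEdgeG' Cmax (.vin v) (tourMate Cmax τ (.vin v)) :=
    ⟨rfl, fun h => hτ _ (by simpa using congrArg τ h.symm)⟩
  have hout (v : V) : IsEdgeG' Cmax (.vout v) (tourMate Cmax τ (.vout v)) :=
    ⟨rfl, (hτ v).symm⟩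
  rw [sum_ewt_matchingOf w hin hout]
  simp only [tourMate, ewt, if_true]
  rw [← Equiv.sum_comp τ, ← Finset.sum_add_distrib]
  simp only [Equiv.symm_apply_apply, add_halves]

end TourMatching

theorem stmt_10_general {V : Type*} [Fintype V] [LinearOrder V]
    (hV : 3 ≤ Fintype.card V)
    (w : V → V → ℝ)
    (Cmax : Equiv.Perm V)
    (τ : Equiv.Perm V) (hτ : τ.IsCycle) (hτs : τ.support = Finset.univ)
    (Mstar : Finset (GV V × GV V))
    (hMstarMax : ∀ M : Finset (GV V × GV V), IsPerfectMatching Cmax M →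
      ∑ p ∈ M, ewt w p ≤ ∑ p ∈ Mstar, ewt w p) :
    (∃ M : Finset (GV V × GV V), IsPerfectMatching Cmax M ∧
        ∑ p ∈ M, ewt w p = ∑ v, w v (τ v)) ∧
      ∑ v, w v (τ v) ≤ ∑ p ∈ Mstar, ewt w p := by
  have hfix (z : V) : τ z ≠ z := Equiv.Perm.mem_support.1 (hτs ▸ Finset.mem_univ z)
  have hM := isPerfectMatching_tourMate (Cmax := Cmax) hfix
    fun z => hτ.apply_apply_ne (by rwa [hτs, Finset.card_univ]) (hfix z)
  have hweight := sum_ewt_tourMate (Cmax := Cmax) hfix w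
  exact ⟨⟨_, hM, hweight⟩, hweight ▸ hMstarMax _ hM⟩

/-- if `|V| ≥ 3`, then for every Hamiltonian tour `τ` of `G`
there is a perfect matching of `G'` whose weight equals `w(τ)`; consequently a
maximum-weight perfect matching `M*` of `G'` has weight at least `w(τ)`, hence
at least `OPT`. -/
theorem stmt_10 {V : Type*} [Fintype V] [LinearOrder V]
    (hV : 3 ≤ Fintype.card V)
    (w : V → V → ℝ) (hw : ∀ u v : V, u ≠ v → 0 ≤ w u v)
    (Cmax : Equiv.Perm V) (hCmax : ∀ v, Cmax v ≠ v)
    (hmax : ∀ σ' : Equiv.Perm V, (∀ v, σ' v ≠ v) →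
      ∑ v, w v (σ' v) ≤ ∑ v, w v (Cmax v))
    (τ : Equiv.Perm V) (hτ : τ.IsCycle) (hτs : τ.support = Finset.univ)
    (Mstar : Finset (GV V × GV V)) (hMstar : IsPerfectMatching Cmax Mstar)
    (hMstarMax : ∀ M : Finset (GV V × GV V), IsPerfectMatching Cmax M →
      ∑ p ∈ M, ewt w p ≤ ∑ p ∈ Mstar, ewt w p) :
    (∃ M : Finset (GV V × GV V), IsPerfectMatching Cmax M ∧
        ∑ p ∈ M, ewt w p = ∑ v, w v (τ v)) ∧
      ∑ v, w v (τ v) ≤ ∑ p ∈ Mstar, ewt w p :=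
  stmt_10_general hV w Cmax τ hτ hτs Mstar hMstarMax
end

section
/- Let C_max be a maximum-weight cycle cover of G and let C_1, C_2 be cycle covers of G with w(C_1) ≥ OPT and w(C_2) ≥ OPT. Suppose the multiset of edges consisting of two copies of each edge of C_max, two copies of each edge of C_1, and two copies of each edge of C_2 can be partitioned into eight sets Z_1, …, Z_8 such that each Z_i is a collection of vertex-disjoint directed paths. Then there exists a Hamiltonian tour of G of weight at least (3/4)·OPT. -/
/-!
Every collection of vertex-disjoint paths extends to a Hamiltonian tour: join the end of one path
to the start of another until a single Hamiltonian path remains, then close it. Since a tour is a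
cycle cover, `w(Cmax) ≥ OPT`, so the eight path collections have total weight
`2 (w(Cmax) + w(C₁) + w(C₂)) ≥ 6 OPT`; the heaviest has weight at least `(3/4) OPT`, and as weights
are nonnegative, any tour extending it is at least as heavy.
-/

/-- A set of edges forming a collection of vertex-disjoint directed paths:
every vertex has at most one outgoing and at most one incoming edge, and there
is no directed cycle. -/
def IsPathCollection {V : Type*} (Z : Finset (V × V)) : Prop :=
  (∀ e ∈ Z, ∀ f ∈ Z, e.1 = f.1 → e = f) ∧
  (∀ e ∈ Z, ∀ f ∈ Z, e.2 = f.2 → e = f) ∧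
  ¬ ∃ x : V, Relation.TransGen (fun a b => (a, b) ∈ Z) x x

open Finset Function Relation

namespace Relation

variable {α : Type*} {r : α → α → Prop}

theorem not_forall_rel_succ_of_acyclic [Finite α] (hr : ¬ ∃ x, TransGen r x x) (f : ℕ → α) :
    ¬ ∀ n, r (f n) (f (n + 1)) := by
  have : IsTrans α (TransGen (swap r)) := ⟨fun _ _ _ => TransGen.trans⟩
  have : Std.Irrefl (TransGen (swap r)) := ⟨fun x hx => hr ⟨x, transGen_swap.mp hx⟩⟩
  have : IsWellFounded α (TransGen (swap r)) := ⟨Finite.wellFounded_of_trans_of_irrefl _⟩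
  obtain ⟨n, hn⟩ := WellFounded.not_rel_apply_succ (r := TransGen (swap r)) f
  exact fun h => hn (TransGen.single (h n))

theorem eq_of_reflTransGen_of_forall_not_rel (hinj : ∀ a b c, r a c → r b c → a = b)
    {a b c : α} (ha : ReflTransGen r a c) (hb : ReflTransGen r b c)
    (ha₀ : ∀ p, ¬ r p a) (hb₀ : ∀ p, ¬ r p b) : a = b := by
  induction ha generalizing b with
  | refl =>
    rcases hb.cases_tail with rfl | ⟨d, -, hd⟩
    · rfl
    · exact absurd hd (ha₀ d)
  | tail _ hdc ih =>
    rcases hb.cases_tail with rfl | ⟨d', hbd', hd'c⟩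
    · exact absurd hdc (hb₀ _)
    · exact ih (hinj _ _ _ hdc hd'c ▸ hbd') hb₀

theorem not_transGen_self_of_or_eq {u v : α} (hr : ¬ ∃ x, TransGen r x x)
    (hvu : ¬ ReflTransGen r v u) : ¬ ∃ x, TransGen (fun a b => r a b ∨ a = u ∧ b = v) x x := by
  suffices ∀ x y, TransGen (fun a b => r a b ∨ a = u ∧ b = v) x y →
      TransGen r x y ∨ ReflTransGen r x u ∧ ReflTransGen r v y by
    rintro ⟨x, hx⟩
    rcases this x x hx with h | ⟨hxu, hvx⟩
    exacts [hr ⟨x, h⟩, hvu (hvx.trans hxu)]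
  intro x y hxy
  induction hxy with
  | single h =>
    rcases h with h | ⟨rfl, rfl⟩
    exacts [.inl (.single h), .inr ⟨.refl, .refl⟩]
  | tail _ h ih =>
    rcases h with h | ⟨rfl, rfl⟩ <;> rcases ih with ih | ⟨hxu, hvb⟩
    exacts [.inl (ih.tail h), .inr ⟨hxu, hvb.tail h⟩, .inr ⟨ih.to_reflTransGen, .refl⟩,
      .inr ⟨hxu, .refl⟩]

end Relation

namespace Equiv.Perm

variable {α : Type*} {τ : Perm α} {u : α}

theorem exists_pow_apply_eq_of_acyclic [Finite α] {r : α → α → Prop}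
    (hr : ¬ ∃ x, TransGen r x x) (hτ : ∀ x ≠ u, r x (τ x)) (y : α) : ∃ n : ℕ, (τ ^ n) y = u := by
  by_contra! h
  refine not_forall_rel_succ_of_acyclic hr (fun n => (τ ^ n) y) fun n => ?_
  rw [pow_succ', mul_apply]
  exact hτ _ (h n)

theorem apply_ne_self_of_forall_exists_pow_apply_eq [Nontrivial α]
    (h : ∀ y, ∃ n : ℕ, (τ ^ n) y = u) (x : α) : τ x ≠ x := by
  intro hx
  obtain rfl : x = u := by
    obtain ⟨n, hn⟩ := h x
    rwa [pow_apply_eq_self_of_apply_eq_self hx] at hn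
  obtain ⟨y, hy⟩ := exists_ne x
  obtain ⟨n, hn⟩ := h y
  exact hy ((τ ^ n).injective (hn.trans (pow_apply_eq_self_of_apply_eq_self hx n).symm))

theorem isCycle_of_forall_exists_pow_apply_eq [Nontrivial α]
    (h : ∀ y, ∃ n : ℕ, (τ ^ n) y = u) : τ.IsCycle := by
  refine ⟨u, apply_ne_self_of_forall_exists_pow_apply_eq h u, fun y _ => ?_⟩
  obtain ⟨n, hn⟩ := h y
  exact SameCycle.symm ⟨n, by rwa [zpow_natCast]⟩

end Equiv.Perm

namespace IsPathCollection

variable {V : Type*} {Z : Finset (V × V)}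

theorem injOn_fst (hZ : IsPathCollection Z) : Set.InjOn Prod.fst (Z : Set (V × V)) :=
  fun e he f hf h => hZ.1 e he f hf h

variable [DecidableEq V]

theorem insert_of_not_reflTransGen (hZ : IsPathCollection Z) {u v : V} (hu : ∀ y, (u, y) ∉ Z)
    (hv : ∀ x, (x, v) ∉ Z) (hvu : ¬ ReflTransGen (fun a b => (a, b) ∈ Z) v u) :
    IsPathCollection (insert (u, v) Z) := by
  refine ⟨?_, ?_, ?_⟩
  · simp only [mem_insert]
    rintro e (rfl | he) f (rfl | hf) h
    · rfl
    · exact absurd (show (u, f.2) ∈ Z by rw [show u = f.1 from h]; exact hf) (hu _)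
    · exact absurd (show (u, e.2) ∈ Z by rw [show u = e.1 from h.symm]; exact he) (hu _)
    · exact hZ.1 e he f hf h
  · simp only [mem_insert]
    rintro e (rfl | he) f (rfl | hf) h
    · rfl
    · exact absurd (show (f.1, v) ∈ Z by rw [show v = f.2 from h]; exact hf) (hv _)
    · exact absurd (show (e.1, v) ∈ Z by rw [show v = e.2 from h.symm]; exact he) (hv _)
    · exact hZ.2.1 e he f hf h
  · simpa only [mem_insert, Prod.mk.injEq, or_comm] using not_transGen_self_of_or_eq hZ.2.2 hvu

variable [Fintype V]

theorem card_compl_image_fst (hZ : IsPathCollection Z) :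
    (Z.image Prod.fst)ᶜ.card = Fintype.card V - Z.card := by
  rw [card_compl, card_image_of_injOn hZ.injOn_fst]

theorem card_compl_image_snd (hZ : IsPathCollection Z) :
    (Z.image Prod.snd)ᶜ.card = Fintype.card V - Z.card := by
  rw [card_compl, card_image_of_injOn fun e he f hf h => hZ.2.1 e he f hf h]

theorem exists_forall_notMem [Nonempty V] (hZ : IsPathCollection Z) :
    ∃ u, ∀ y, (u, y) ∉ Z := by
  by_contra! h
  choose f hf using h
  exact not_forall_rel_succ_of_acyclic hZ.2.2 (fun n => f^[n] (Classical.arbitrary V))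
    fun n => by rw [iterate_succ_apply']; exact hf _

theorem card_lt [Nonempty V] (hZ : IsPathCollection Z) : Z.card < Fintype.card V := by
  obtain ⟨u, hu⟩ := hZ.exists_forall_notMem
  have : u ∈ (Z.image Prod.fst)ᶜ := by simpa using hu
  have := hZ.card_compl_image_fst ▸ card_pos.mpr ⟨u, this⟩
  omega

/-- The edge added joins the end `u` of a path to the start `v` of a different path. -/
theorem exists_insert (hZ : IsPathCollection Z) (hcard : Z.card + 1 < Fintype.card V) :
    ∃ e ∉ Z, IsPathCollection (insert e Z) := by
  have : Nonempty V := Fintype.card_pos_iff.mp (by omega)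
  obtain ⟨u, hu⟩ := hZ.exists_forall_notMem
  have hsrc : ∀ v ∈ (Z.image Prod.snd)ᶜ, ∀ x, (x, v) ∉ Z := by simp
  obtain ⟨v₁, hv₁, v₂, hv₂, hne⟩ :=
    one_lt_card.mp (show 1 < (Z.image Prod.snd)ᶜ.card by rw [hZ.card_compl_image_snd]; omega)
  obtain ⟨v, hv, hvu⟩ : ∃ v ∈ (Z.image Prod.snd)ᶜ, ¬ ReflTransGen (fun a b => (a, b) ∈ Z) v u := by
    by_contra! h
    exact hne (eq_of_reflTransGen_of_forall_not_rel (r := fun a b => (a, b) ∈ Z)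
      (fun a b c ha hb => congrArg Prod.fst (hZ.2.1 _ ha _ hb rfl))
      (h v₁ hv₁) (h v₂ hv₂) (hsrc v₁ hv₁) (hsrc v₂ hv₂))
  exact ⟨(u, v), hu v, hZ.insert_of_not_reflTransGen hu (hsrc v hv) hvu⟩

theorem exists_superset_card_add_one_eq [Nonempty V] (hZ : IsPathCollection Z) :
    ∃ Z', Z ⊆ Z' ∧ IsPathCollection Z' ∧ Z'.card + 1 = Fintype.card V := by
  induction hk : Fintype.card V - (Z.card + 1) generalizing Z with
  | zero => exact ⟨Z, subset_rfl, hZ, by have := hZ.card_lt; omega⟩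
  | succ k ih =>
    obtain ⟨e, he, hZe⟩ := hZ.exists_insert (by omega)
    obtain ⟨Z', hsub, hZ', hcard⟩ := ih hZe (by rw [card_insert_of_notMem he]; omega)
    exact ⟨Z', (subset_insert e Z).trans hsub, hZ', hcard⟩

/-- A Hamiltonian path from `v` to `u` closes into a permutation that follows the path and
sends `u` back to `v`. -/
theorem exists_perm_of_card_add_one_eq (hZ : IsPathCollection Z)
    (hcard : Z.card + 1 = Fintype.card V) :
    ∃ (τ : Equiv.Perm V) (u : V), (∀ y, (u, y) ∉ Z) ∧ ∀ x ≠ u, (x, τ x) ∈ Z := by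
  obtain ⟨u, hu⟩ := card_eq_one.mp (show (Z.image Prod.fst)ᶜ.card = 1 by
    rw [hZ.card_compl_image_fst]; omega)
  obtain ⟨v, hv⟩ := card_pos.mp (show 0 < (Z.image Prod.snd)ᶜ.card by
    rw [hZ.card_compl_image_snd]; omega)
  have hout : ∀ x, (∀ y, (x, y) ∉ Z) ↔ x = u := by
    intro x
    simpa using Finset.ext_iff.mp hu x
  simp only [mem_compl, mem_image, Prod.exists, exists_eq_right, not_exists] at hv
  have hsucc : ∀ x ≠ u, ∃ y, (x, y) ∈ Z := fun x hx => by
    by_contra! h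
    exact hx ((hout x).mp h)
  choose! s hs using hsucc
  have hs_ne : ∀ x ≠ u, s x ≠ v := fun x hx h => hv x (h ▸ hs x hx)
  have hinj : Injective (update s u v) := by
    intro x y h
    by_cases hx : x = u <;> by_cases hy : y = u
    · exact hx.trans hy.symm
    · rw [hx, update_self, update_of_ne hy] at h
      exact absurd h.symm (hs_ne y hy)
    · rw [hy, update_self, update_of_ne hx] at h
      exact absurd h (hs_ne x hx)
    · rw [update_of_ne hx, update_of_ne hy] at h
      exact congrArg Prod.fst (hZ.2.1 _ (hs x hx) _ (hs y hy) h)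
  refine ⟨Equiv.ofBijective _ (Finite.injective_iff_bijective.mp hinj), u, (hout u).mpr rfl,
    fun x hx => ?_⟩
  simpa [update_of_ne hx] using hs x hx

theorem exists_isCycle_extending [Nontrivial V] (hZ : IsPathCollection Z) :
    ∃ τ : Equiv.Perm V, τ.IsCycle ∧ τ.support = univ ∧ ∀ e ∈ Z, τ e.1 = e.2 := by
  obtain ⟨Z', hZZ', hZ', hcard⟩ := hZ.exists_superset_card_add_one_eq
  obtain ⟨τ, u, hu, hτ⟩ := hZ'.exists_perm_of_card_add_one_eq hcard
  have hreach := τ.exists_pow_apply_eq_of_acyclic hZ'.2.2 hτ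
  refine ⟨τ, Equiv.Perm.isCycle_of_forall_exists_pow_apply_eq hreach,
    eq_univ_of_forall fun x => Equiv.Perm.mem_support.mpr
      (Equiv.Perm.apply_ne_self_of_forall_exists_pow_apply_eq hreach x), fun e he => ?_⟩
  have : e.1 ≠ u := fun h => hu e.2 (h ▸ hZZ' he)
  exact congrArg Prod.snd (hZ'.1 _ (hτ _ this) _ (hZZ' he) rfl)

end IsPathCollection

section Weights

variable {V : Type*} [Fintype V] [DecidableEq V]

theorem sum_le_sum_apply_of_forall_apply_eq {w : V → V → ℝ} (hw : ∀ u v, u ≠ v → 0 ≤ w u v)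
    {Z : Finset (V × V)} (hZ : Set.InjOn Prod.fst (Z : Set (V × V))) {τ : Equiv.Perm V}
    (hτ : ∀ x, τ x ≠ x) (hZτ : ∀ e ∈ Z, τ e.1 = e.2) : ∑ e ∈ Z, w e.1 e.2 ≤ ∑ x, w x (τ x) :=
  calc ∑ e ∈ Z, w e.1 e.2
    _ = ∑ e ∈ Z, w e.1 (τ e.1) := sum_congr rfl fun e he => by rw [hZτ e he]
    _ = ∑ x ∈ Z.image Prod.fst, w x (τ x) := (sum_image (f := fun x => w x (τ x)) hZ).symm
    _ ≤ ∑ x, w x (τ x) := sum_le_univ_sum_of_nonneg fun x => hw _ _ (hτ x).symm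

theorem sum_ite_apply_eq_mul (w : V → V → ℝ) (σ : Equiv.Perm V) (c : ℝ) :
    ∑ e : V × V, (if σ e.1 = e.2 then c else 0) * w e.1 e.2 = c * ∑ x, w x (σ x) := by
  rw [Fintype.sum_prod_type, mul_sum]
  simp [ite_mul, sum_ite_eq]

end Weights

theorem sum_sum_eq_sum_card_filter_mul {ι α : Type*} [Fintype ι] [Fintype α] [DecidableEq α]
    (Z : ι → Finset α) (f : α → ℝ) :
    ∑ i, ∑ a ∈ Z i, f a = ∑ a, ((univ.filter fun i => a ∈ Z i).card : ℝ) * f a := by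
  simp only [card_filter, Nat.cast_sum, Nat.cast_ite, Nat.cast_one, Nat.cast_zero, sum_mul,
    ite_mul, one_mul, zero_mul]
  rw [sum_comm]
  simp [sum_ite_mem]

theorem stmt_16_general {V : Type*} [Fintype V] [DecidableEq V]
    (hV : 2 ≤ Fintype.card V)
    (w : V → V → ℝ) (hw : ∀ u v : V, u ≠ v → 0 ≤ w u v)
    (Cmax : Equiv.Perm V)
    (hmax : ∀ σ' : Equiv.Perm V, (∀ v, σ' v ≠ v) →
      ∑ v, w v (σ' v) ≤ ∑ v, w v (Cmax v))
    (C1 : Equiv.Perm V)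
    (C2 : Equiv.Perm V)
    (OPT : ℝ)
    (hOPT : IsGreatest ((fun τ : Equiv.Perm V => ∑ v, w v (τ v)) ''
      {τ : Equiv.Perm V | τ.IsCycle ∧ τ.support = Finset.univ}) OPT)
    (hC1w : OPT ≤ ∑ v, w v (C1 v))
    (hC2w : OPT ≤ ∑ v, w v (C2 v))
    (Z : Fin 8 → Finset (V × V))
    (hpath : ∀ i : Fin 8, IsPathCollection (Z i))
    (hpart : ∀ e : V × V,
      (Finset.univ.filter fun i : Fin 8 => e ∈ Z i).card =
        (if Cmax e.1 = e.2 then 2 else 0) + (if C1 e.1 = e.2 then 2 else 0) +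
          (if C2 e.1 = e.2 then 2 else 0)) :
    ∃ τ : Equiv.Perm V, τ.IsCycle ∧ τ.support = Finset.univ ∧
      (3 / 4) * OPT ≤ ∑ v, w v (τ v) := by
  have : Nontrivial V := Fintype.one_lt_card_iff_nontrivial.mp hV
  obtain ⟨τ₀, ⟨-, hτ₀⟩, rfl⟩ := hOPT.1
  have hCmaxw := hmax τ₀ fun v => Equiv.Perm.mem_support.mp (hτ₀ ▸ mem_univ v)
  have htotal : ∑ i, ∑ e ∈ Z i, w e.1 e.2 =
      2 * ∑ v, w v (Cmax v) + 2 * ∑ v, w v (C1 v) + 2 * ∑ v, w v (C2 v) := by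
    rw [sum_sum_eq_sum_card_filter_mul Z fun e => w e.1 e.2]
    simp only [hpart, Nat.cast_add, Nat.cast_ite, Nat.cast_ofNat, Nat.cast_zero, add_mul,
      sum_add_distrib, sum_ite_apply_eq_mul]
  obtain ⟨i, -, hi⟩ : ∃ i ∈ univ, 3 / 4 * ∑ v, w v (τ₀ v) ≤ ∑ e ∈ Z i, w e.1 e.2 :=
    exists_le_of_sum_le univ_nonempty (by
      rw [htotal, sum_const, card_univ, Fintype.card_fin, nsmul_eq_mul]; push_cast; linarith)
  obtain ⟨τ, hcyc, hsupp, hτZ⟩ := (hpath i).exists_isCycle_extending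
  exact ⟨τ, hcyc, hsupp, hi.trans (sum_le_sum_apply_of_forall_apply_eq hw (hpath i).injOn_fst
    (fun x => Equiv.Perm.mem_support.mp (hsupp ▸ mem_univ x)) hτZ)⟩

/-- If `Cmax` is a maximum-weight cycle cover, `C1` and `C2` are
cycle covers of weight at least `OPT` (the maximum weight of a Hamiltonian
tour), and the multiset `2·E(Cmax) + 2·E(C1) + 2·E(C2)` can be partitioned
into eight collections of vertex-disjoint directed paths, then there is a
Hamiltonian tour of weight at least `(3/4)·OPT`. -/
theorem stmt_16 {V : Type*} [Fintype V] [DecidableEq V]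
    (hV : 2 ≤ Fintype.card V)
    (w : V → V → ℝ) (hw : ∀ u v : V, u ≠ v → 0 ≤ w u v)
    (Cmax : Equiv.Perm V) (hCmax : ∀ v, Cmax v ≠ v)
    (hmax : ∀ σ' : Equiv.Perm V, (∀ v, σ' v ≠ v) →
      ∑ v, w v (σ' v) ≤ ∑ v, w v (Cmax v))
    (C1 : Equiv.Perm V) (hC1 : ∀ v, C1 v ≠ v)
    (C2 : Equiv.Perm V) (hC2 : ∀ v, C2 v ≠ v)
    (OPT : ℝ)
    (hOPT : IsGreatest ((fun τ : Equiv.Perm V => ∑ v, w v (τ v)) ''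
      {τ : Equiv.Perm V | τ.IsCycle ∧ τ.support = Finset.univ}) OPT)
    (hC1w : OPT ≤ ∑ v, w v (C1 v))
    (hC2w : OPT ≤ ∑ v, w v (C2 v))
    (Z : Fin 8 → Finset (V × V))
    (hpath : ∀ i : Fin 8, IsPathCollection (Z i))
    (hpart : ∀ e : V × V,
      (Finset.univ.filter fun i : Fin 8 => e ∈ Z i).card =
        (if Cmax e.1 = e.2 then 2 else 0) + (if C1 e.1 = e.2 then 2 else 0) +
          (if C2 e.1 = e.2 then 2 else 0)) :
    ∃ τ : Equiv.Perm V, τ.IsCycle ∧ τ.support = Finset.univ ∧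
      (3 / 4) * OPT ≤ ∑ v, w v (τ v) :=
  stmt_16_general hV w hw Cmax hmax C1 C2 OPT hOPT hC1w hC2w Z hpath hpart
end
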